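/- arXiv:2208.05107 — 8 statements merged into one kernel-verified Lean document; each statement's English description precedes it below -/
import Mathlib

section
/- Let Γ = Cay(G,S) be a connected abelian Cayley graph with transfer matrix H(t). Then Γ has (α,β)-fractional revival from some vertex x to some vertex y at time t if and only if H(t) = αI + βQ where Q is a symmetric permutation matrix with Q² = I and no fixed points; moreover in this case α·conj(β) + conj(α)·β = 0. -/
/-!
The adjacency matrix `A` is circulant on the abelian group `G`, so `H(t) = exp(itA)` commutes with
all translations and is circulant too. A circulant matrix is determined by one column, so a column
`α e_x + β e_y` forces `H(t) = α I + β C` with `C` the translation by `d = y - x`; the symmetry of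
`H(t)` then gives `-d = d`, i.e. `C` is a fixed-point-free involution. The relation between `α`
and `β` is the orthogonality of the columns `x` and `y` of the unitary matrix `H(t)`.
-/

open Matrix NormedSpace

namespace Matrix

section Circulant

variable {n R : Type*} [AddCommGroup n] [DecidableEq n]

theorem mul_circulant_single_one_apply [Fintype n] [NonAssocSemiring R] (M : Matrix n n R)
    (k i j : n) :
    (M * circulant (Pi.single k (1 : R))) i j = M i (j + k) := by
  simp [mul_apply, circulant_apply, Pi.single_apply, sub_eq_iff_eq_add, add_comm]

theorem circulant_single_one_mul_apply [Fintype n] [NonAssocSemiring R] (M : Matrix n n R)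
    (k i j : n) :
    (circulant (Pi.single k (1 : R)) * M) i j = M (i - k) j := by
  simp [mul_apply, circulant_apply, Pi.single_apply, sub_eq_iff_comm]

theorem eq_circulant_of_forall_commute [Fintype n] [NonAssocSemiring R] {M : Matrix n n R}
    (h : ∀ k, Commute M (circulant (Pi.single k (1 : R)))) : M = circulant fun i => M i 0 := by
  ext i j
  simpa [mul_circulant_single_one_apply, circulant_single_one_mul_apply, circulant_apply]
    using congr_fun (congr_fun (h j).eq i) 0

theorem circulant_mulVec_single_one [Fintype n] [NonAssocSemiring R] (v : n → R) (x : n) :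
    circulant v *ᵥ Pi.single x 1 = fun g => v (g - x) := by
  ext g; simp [circulant_apply]

theorem permMatrix_addRight [Zero R] [One R] (d : n) :
    (Equiv.addRight d).permMatrix R = circulant (Pi.single (-d) (1 : R)) := by
  ext i j
  simp [Equiv.Perm.permMatrix, PEquiv.toMatrix_apply, circulant_apply, Pi.single_apply,
    sub_eq_iff_eq_add, neg_add_eq_sub, eq_sub_iff_add_eq]

theorem eq_single_add_single_of_circulant_mulVec_single [Fintype n] [Semiring R] {w : n → R}
    {α β : R} {x y : n}
    (h : circulant w *ᵥ Pi.single x 1 = α • Pi.single x 1 + β • Pi.single y 1) :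
    w = Pi.single 0 α + Pi.single (y - x) β := by
  ext g
  simpa [circulant_mulVec_single_one, Pi.single_apply, ← eq_sub_iff_add_eq] using
    congr_fun h (g + x)

theorem exists_involution_of_isSymm_circulant [Fintype n] [Semiring R] {w : n → R} {α β : R}
    {x y : n} (hβ : β ≠ 0) (hxy : x ≠ y) (hsymm : (circulant w).IsSymm)
    (h : circulant w *ᵥ Pi.single x 1 = α • Pi.single x 1 + β • Pi.single y 1) :
    ∃ σ : Equiv.Perm n, (∀ g, σ g ≠ g) ∧ σ * σ = 1 ∧ (σ.permMatrix R)ᵀ = σ.permMatrix R ∧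
      circulant w = α • 1 + β • σ.permMatrix R := by
  have hw := eq_single_add_single_of_circulant_mulVec_single h
  set d := y - x
  have hd : d ≠ 0 := sub_ne_zero.2 hxy.symm
  have hneg : -d = d := by
    by_contra hne
    exact hβ (by simpa [hw, hd, hne] using (circulant_isSymm_apply hsymm d).symm)
  have hσ : (Equiv.addRight d)⁻¹ = Equiv.addRight d := by
    ext g; simp [hneg]
  refine ⟨Equiv.addRight d, by simp [hd], ?_, by rw [transpose_permMatrix, hσ], ?_⟩
  · simpa only [hσ] using inv_mul_cancel (Equiv.addRight d)
  · rw [permMatrix_addRight, hneg, hw]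
    ext i j
    simp [circulant_apply, Pi.single_apply, one_apply, sub_eq_zero]

end Circulant

section Exp

variable {n 𝕂 : Type*} [AddCommGroup n] [Fintype n] [DecidableEq n] [RCLike 𝕂]

theorem exp_circulant (v : n → 𝕂) :
    exp (circulant v) = circulant fun i => exp (circulant v) i 0 :=
  eq_circulant_of_forall_commute fun _ => Commute.exp_left (circulant_mul_comm v _)

end Exp

theorem exp_conjTranspose_mul_self_of_conjTranspose_eq_neg {m 𝕂 : Type*} [Fintype m]
    [DecidableEq m] [RCLike 𝕂] {M : Matrix m m 𝕂} (h : Mᴴ = -M) : (exp M)ᴴ * exp M = 1 := by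
  rw [← exp_conjTranspose, h, ← exp_add_of_commute _ _ (Commute.refl M).neg_left,
    neg_add_cancel, NormedSpace.exp_zero]

theorem add_smul_permMatrix_mulVec_single {m R : Type*} [Fintype m] [DecidableEq m]
    [Semiring R] {σ : Equiv.Perm m} (hσ : σ * σ = 1) (α β : R) (x : m) :
    (α • 1 + β • σ.permMatrix R) *ᵥ Pi.single x 1 =
      α • Pi.single x 1 + β • Pi.single (σ x) 1 := by
  have hσx : ∀ g, σ g = x ↔ g = σ x := fun g => by
    rw [← Equiv.eq_symm_apply, ← Equiv.Perm.inv_def, inv_eq_of_mul_eq_one_left hσ]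
  ext g
  simp [one_apply, Equiv.Perm.permMatrix, PEquiv.toMatrix_apply, Pi.single_apply, hσx]

theorem mul_star_add_star_mul_eq_zero {m R : Type*} [Fintype m] [DecidableEq m] [CommRing R]
    [StarRing R] {U : Matrix m m R} (hU : Uᴴ * U = 1) {α β : R} {x y : m} (hxy : x ≠ y)
    (hx : U *ᵥ Pi.single x 1 = α • Pi.single x 1 + β • Pi.single y 1)
    (hy : U *ᵥ Pi.single y 1 = α • Pi.single y 1 + β • Pi.single x 1) :
    α * star β + star α * β = 0 := by
  have hcol : ∀ z g, U g z = (U *ᵥ Pi.single z 1) g := fun z g => by simp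
  have horth : star β * α + star α * β = 0 := by
    simpa [mul_apply, hcol x, hcol y, hx, hy, hxy, hxy.symm, Pi.single_apply, add_mul, mul_add,
      Finset.sum_add_distrib] using congr_fun (congr_fun hU y) x
  linear_combination horth

end Matrix

theorem fractional_revival_iff_perm_matrix_general
    (G : Type) [AddCommGroup G] [Fintype G] [DecidableEq G]
    (S : Finset G) (hS : ∀ s : G, s ∈ S ↔ -s ∈ S)
    (A : Matrix G G ℂ) (hA : ∀ g h : G, A g h = if g - h ∈ S then 1 else 0)
    (t : ℝ) (Ht : Matrix G G ℂ)
    (hHt : Ht = NormedSpace.exp ((Complex.I * (t : ℂ)) • A))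
    (α β : ℂ) (hβ : β ≠ 0) :
    ((∃ x y : G, x ≠ y ∧
        Ht *ᵥ (Pi.single x 1 : G → ℂ) = α • (Pi.single x 1 : G → ℂ) + β • (Pi.single y 1 : G → ℂ)) ↔
      (∃ σ : Equiv.Perm G, (∀ g : G, σ g ≠ g) ∧ σ * σ = 1 ∧
        (σ.permMatrix ℂ)ᵀ = σ.permMatrix ℂ ∧
        Ht = α • (1 : Matrix G G ℂ) + β • σ.permMatrix ℂ)) ∧
    ((∃ x y : G, x ≠ y ∧
        Ht *ᵥ (Pi.single x 1 : G → ℂ) = α • (Pi.single x 1 : G → ℂ) + β • (Pi.single y 1 : G → ℂ)) →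
      α * (starRingEnd ℂ) β + (starRingEnd ℂ) α * β = 0) := by
  have hAc : A = circulant fun g => if g ∈ S then 1 else 0 := by
    ext g h; rw [hA, circulant_apply]
  have hAsymm : A.IsSymm := hAc ▸ circulant_isSymm_iff.2 fun g => by simp only [← hS]
  have hAherm : Aᴴ = A := by
    ext g h; simpa [hA] using congr_fun (congr_fun hAsymm g) h
  have hE : Ht = circulant fun g => Ht g 0 := by
    rw [hHt, hAc, ← circulant_smul]; exact exp_circulant _
  have hEsymm : Ht.IsSymm := hHt ▸ (hAsymm.smul _).exp
  have hEunit : Htᴴ * Ht = 1 := hHt ▸ exp_conjTranspose_mul_self_of_conjTranspose_eq_neg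
    (by rw [conjTranspose_smul, hAherm]; simp [neg_smul])
  have fwd : ∀ x y, x ≠ y → Ht *ᵥ Pi.single x 1 = α • Pi.single x 1 + β • Pi.single y 1 →
      ∃ σ : Equiv.Perm G, (∀ g : G, σ g ≠ g) ∧ σ * σ = 1 ∧ (σ.permMatrix ℂ)ᵀ = σ.permMatrix ℂ ∧
        Ht = α • (1 : Matrix G G ℂ) + β • σ.permMatrix ℂ := by
    rw [hE]; exact fun x y hxy h => exists_involution_of_isSymm_circulant hβ hxy (hE ▸ hEsymm) h
  refine ⟨⟨fun ⟨x, y, hxy, h⟩ => fwd x y hxy h, fun ⟨σ, hfix, hσ, _, hHσ⟩ =>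
    ⟨0, σ 0, (hfix 0).symm, hHσ ▸ add_smul_permMatrix_mulVec_single hσ α β 0⟩⟩, ?_⟩
  rintro ⟨x, y, hxy, h⟩
  obtain ⟨σ, hfix, hσ, _, hHσ⟩ := fwd x y hxy h
  refine mul_star_add_star_mul_eq_zero hEunit (hfix 0).symm ?_ ?_ <;>
    rw [hHσ, add_smul_permMatrix_mulVec_single hσ]
  rw [← Equiv.Perm.mul_apply, hσ, Equiv.Perm.one_apply]

/-- An abelian Cayley graph has `(α,β)`-fractional revival between some
pair of distinct vertices at time `t` iff `H(t) = α I + β Q` for a symmetric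
permutation matrix `Q` with `Q² = I` and no fixed points; moreover, in that case
`α conj(β) + conj(α) β = 0`. -/
theorem fractional_revival_iff_perm_matrix
    (G : Type) [AddCommGroup G] [Fintype G] [DecidableEq G]
    (S : Finset G) (hS : ∀ s : G, s ∈ S ↔ -s ∈ S)
    (hgen : AddSubgroup.closure (S : Set G) = ⊤)
    (A : Matrix G G ℂ) (hA : ∀ g h : G, A g h = if g - h ∈ S then 1 else 0)
    (t : ℝ) (Ht : Matrix G G ℂ)
    (hHt : Ht = NormedSpace.exp ((Complex.I * (t : ℂ)) • A))
    (α β : ℂ) (hβ : β ≠ 0) (hnorm : ‖α‖ ^ 2 + ‖β‖ ^ 2 = 1) :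
    ((∃ x y : G, x ≠ y ∧
        Ht *ᵥ (Pi.single x 1 : G → ℂ) = α • (Pi.single x 1 : G → ℂ) + β • (Pi.single y 1 : G → ℂ)) ↔
      (∃ σ : Equiv.Perm G, (∀ g : G, σ g ≠ g) ∧ σ * σ = 1 ∧
        (σ.permMatrix ℂ)ᵀ = σ.permMatrix ℂ ∧
        Ht = α • (1 : Matrix G G ℂ) + β • σ.permMatrix ℂ)) ∧
    ((∃ x y : G, x ≠ y ∧
        Ht *ᵥ (Pi.single x 1 : G → ℂ) = α • (Pi.single x 1 : G → ℂ) + β • (Pi.single y 1 : G → ℂ)) →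
      α * (starRingEnd ℂ) β + (starRingEnd ℂ) α * β = 0) :=
  fractional_revival_iff_perm_matrix_general G S hS A hA t Ht hHt α β hβ
end

section
/- Suppose the abelian Cayley graph Cay(G,S) has (α,β)-fractional revival with αβ ≠ 0 from vertex x to vertex y at some time t. Then a = x - y has order two in G. In particular, fractional revival (with αβ≠0) cannot occur on any abelian Cayley graph whose underlying group has odd order. -/
open Matrix

/-- If an abelian Cayley graph has `(α,β)`-fractional revival with
`αβ ≠ 0` from `x` to `y` at some time `t`, then `a = x - y` has order two in `G`;
in particular the order of `G` cannot be odd. -/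
theorem fractional_revival_diff_order_two
    (G : Type) [AddCommGroup G] [Fintype G] [DecidableEq G]
    (S : Finset G) (hS : ∀ s : G, s ∈ S ↔ -s ∈ S)
    (hgen : AddSubgroup.closure (S : Set G) = ⊤)
    (A : Matrix G G ℂ) (hA : ∀ g h : G, A g h = if g - h ∈ S then 1 else 0)
    (t : ℝ) (Ht : Matrix G G ℂ)
    (hHt : Ht = NormedSpace.exp ((Complex.I * (t : ℂ)) • A))
    (α β : ℂ) (hα : α ≠ 0) (hβ : β ≠ 0)
    (hnorm : ‖α‖ ^ 2 + ‖β‖ ^ 2 = 1)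
    (x y : G) (hxy : x ≠ y)
    (hFR : Ht *ᵥ (Pi.single x 1 : G → ℂ) =
      α • (Pi.single x 1 : G → ℂ) + β • (Pi.single y 1 : G → ℂ)) :
    addOrderOf (x - y) = 2 ∧ ¬ Odd (Fintype.card G) := by
  -- translation matrices
  set T : G → Matrix G G ℂ := fun k => Matrix.of fun g h => if g = h + k then 1 else 0 with hT
  have hmulT : ∀ (M : Matrix G G ℂ) (k g h : G), (M * T k) g h = M g (h + k) := by
    intro M k g h
    simp only [Matrix.mul_apply, hT, Matrix.of_apply, mul_ite, mul_one, mul_zero]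
    simp [Finset.sum_ite_eq' Finset.univ (h + k) (fun j => M g j)]
  have hTmul : ∀ (M : Matrix G G ℂ) (k g h : G), (T k * M) g h = M (g - k) h := by
    intro M k g h
    have he : ∀ j : G, (g = j + k) = (j = g - k) := by
      intro j; rw [eq_iff_iff, eq_sub_iff_add_eq, eq_comm]
    simp only [Matrix.mul_apply, hT, Matrix.of_apply, he, ite_mul, one_mul, zero_mul]
    simp [Finset.sum_ite_eq Finset.univ (g - k) (fun j => M j h)]
  -- A commutes with translations
  have hAT : ∀ k : G, Commute ((Complex.I * (t : ℂ)) • A) (T k) := by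
    intro k
    apply Commute.smul_left
    show A * T k = T k * A
    ext g h
    rw [hmulT, hTmul, hA, hA, show g - (h + k) = g - k - h by abel]
  -- hence Ht commutes with translations, so Ht is translation invariant
  have hHtT : ∀ k g h : G, Ht (g + k) (h + k) = Ht g h := by
    intro k g h
    have hc : Ht * T k = T k * Ht := by
      rw [hHt]; exact ((hAT k).exp_left).eq
    have h1 := congrFun (congrFun hc (g + k)) h
    rw [hmulT, hTmul, add_sub_cancel_right] at h1
    exact h1
  -- Ht is symmetric
  have hAsymm : Aᵀ = A := by
    ext g h
    rw [Matrix.transpose_apply, hA, hA]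
    congr 1
    simp only [eq_iff_iff]
    have := hS (h - g)
    rw [neg_sub] at this
    exact this
  have hHtsymm : ∀ g h : G, Ht g h = Ht h g := by
    intro g h
    have hsy : Htᵀ = Ht := by
      rw [hHt, ← Matrix.exp_transpose, Matrix.transpose_smul, hAsymm]
    exact congrFun (congrFun hsy h) g
  -- the column of Ht at x
  have hf : ∀ g : G, Ht g x =
      α * (if g = x then 1 else 0) + β * (if g = y then 1 else 0) := by
    intro g
    have h1 := congrFun hFR g
    simp only [Matrix.mulVec, dotProduct, Pi.add_apply, Pi.smul_apply, smul_eq_mul,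
      Pi.single_apply] at h1
    rw [← h1]
    simp [mul_ite, mul_one, mul_zero, Finset.sum_ite_eq' Finset.univ x (fun j => Ht g j)]
  -- key: Ht (x + (x-y)) x = Ht x y = Ht y x = β
  have hyx : Ht y x = β := by
    rw [hf y, if_neg (Ne.symm hxy), if_pos rfl]; ring
  have hkey : Ht (x + (x - y)) x = β := by
    have h1 := hHtT (x - y) x y
    rw [show y + (x - y) = x by abel] at h1
    rw [h1, hHtsymm, hyx]
  -- conclude x + (x - y) = y
  have hmain : x + (x - y) = y := by
    by_contra hne
    have hne' : x + (x - y) ≠ x := by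
      intro hc
      exact hxy (by have := add_left_cancel (a := x) (by rw [hc, add_zero] : x + (x - y) = x + 0); exact sub_eq_zero.mp this)
    rw [hf, if_neg hne', if_neg hne] at hkey
    simp at hkey
    exact hβ hkey.symm
  have h2smul : 2 • (x - y) = 0 := by
    rw [two_nsmul]
    have : (x - y) + (x - y) = (x + (x - y)) - y := by abel
    rw [this, hmain, sub_self]
  haveI : Fact (Nat.Prime 2) := ⟨Nat.prime_two⟩
  have hord : addOrderOf (x - y) = 2 :=
    addOrderOf_eq_prime h2smul (sub_ne_zero.mpr hxy)
  refine ⟨hord, ?_⟩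
  intro hodd
  have hdvd : (2 : ℕ) ∣ Fintype.card G := hord ▸ addOrderOf_dvd_card
  exact ((Nat.not_even_iff_odd.mpr hodd)) (even_iff_two_dvd.mpr hdvd)
end

section
/- Let G be a finite abelian group of even order n, S = -S ⊆ G, and suppose α, β are nonzero complex numbers with the following property: a ∈ G has order two, Cay(G,S) is integral, and for every g with χ_a(g)=1, e^{itλ_g} = α+β, while for every g with χ_a(g)=-1, e^{itλ_g} = α-β. Then |α|²+|β|²=1 and H(t) = αI + βQ where Q is the permutation matrix of translation by a; consequently Cay(G,S) has (α,β)-fractional revival from x to x+a for every x ∈ G at time t. -/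
open Matrix

/-- sufficiency in Theorem 2.2: if `a` has order two, the graph is
integral, and `e^{itλ_g} = α + β` on `G₀ = {g : χ_a g = 1}` while
`e^{itλ_g} = α - β` on `G₁ = {g : χ_a g = -1}`, then `|α|² + |β|² = 1`,
`H(t) = α I + β Q` with `Q` the permutation matrix of translation by `a`, and the
graph has `(α,β)`-fractional revival from `x` to `x + a` for every `x`. -/
theorem fractional_revival_sufficiency
    (G : Type) [AddCommGroup G] [Fintype G] [DecidableEq G]
    (S : Finset G) (hS : ∀ s : G, s ∈ S ↔ -s ∈ S)
    (χ : G ≃ AddChar G ℂ)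
    (hχmul : ∀ g₁ g₂ x : G, χ (g₁ + g₂) x = χ g₁ x * χ g₂ x)
    (hχ0 : ∀ x : G, χ 0 x = 1)
    (hχsymm : ∀ g h : G, χ g h = χ h g)
    (a : G) (ha : addOrderOf a = 2)
    (A : Matrix G G ℂ) (hA : ∀ g h : G, A g h = if g - h ∈ S then 1 else 0)
    (t : ℝ) (Ht : Matrix G G ℂ)
    (hHt : Ht = NormedSpace.exp ((Complex.I * (t : ℂ)) • A))
    (α β : ℂ) (hα : α ≠ 0) (hβ : β ≠ 0)
    (hintegral : ∀ g : G, ∃ m : ℤ, ∑ s ∈ S, χ g s = (m : ℂ))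
    (hG0 : ∀ g : G, χ a g = 1 →
      Complex.exp (Complex.I * (t : ℂ) * (∑ s ∈ S, χ g s)) = α + β)
    (hG1 : ∀ g : G, χ a g = -1 →
      Complex.exp (Complex.I * (t : ℂ) * (∑ s ∈ S, χ g s)) = α - β) :
    ‖α‖ ^ 2 + ‖β‖ ^ 2 = 1 ∧
    Ht = α • (1 : Matrix G G ℂ) +
      β • Matrix.of (fun g h : G => if h = g + a then (1 : ℂ) else 0) ∧
    ∀ x : G, Ht *ᵥ (Pi.single x 1 : G → ℂ) =
      α • (Pi.single x 1 : G → ℂ) + β • (Pi.single (x + a) 1 : G → ℂ) := by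
  classical
  -- basic facts about a
  have haa : a + a = 0 := by
    have h2 := addOrderOf_nsmul_eq_zero a
    rw [ha, two_nsmul] at h2
    exact h2
  have ha0 : a ≠ 0 := by
    intro h
    rw [h] at ha
    simp at ha
  -- character basics
  have hmap0 : ∀ g : G, χ g 0 = 1 := fun g => AddChar.map_zero_eq_one (χ g)
  have hmadd : ∀ g x y : G, χ g (x + y) = χ g x * χ g y :=
    fun g x y => AddChar.map_add_eq_mul (χ g) x y
  have hne : ∀ y g : G, χ y g ≠ 0 := by
    intro y g
    have h1 : χ y g * χ y (-g) = 1 := by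
      rw [← hmadd, add_neg_cancel, hmap0]
    exact left_ne_zero_of_mul_eq_one h1
  have hnegswap : ∀ y g : G, χ y (-g) = χ (-y) g := by
    intro y g
    have h1 : χ y (-g) * χ y g = 1 := by
      rw [← hmadd, neg_add_cancel, hmap0]
    have h2 : χ (-y) g * χ y g = 1 := by
      rw [← hχmul, neg_add_cancel, hχ0]
    exact mul_right_cancel₀ (hne y g) (h1.trans h2.symm)
  have hzero : χ 0 = (0 : AddChar G ℂ) := by
    apply DFunLike.ext
    intro x
    rw [hχ0, AddChar.zero_apply]
  -- orthogonality
  have hsum : ∀ c : G, ∑ g : G, χ c g = if c = 0 then (Fintype.card G : ℂ) else 0 := by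
    intro c
    by_cases hc : c = 0
    · simp [hc, hχ0]
    · rw [if_neg hc]
      rw [AddChar.sum_eq_zero_iff_ne_zero]
      intro h0
      exact hc (χ.injective (h0.trans hzero.symm))
  -- χ a takes values ±1
  have hsq : ∀ g : G, χ a g = 1 ∨ χ a g = -1 := by
    intro g
    have h1 : χ a g * χ a g = 1 := by
      rw [← hχmul, haa, hχ0]
    exact mul_self_eq_one_iff.mp h1
  -- eigenvalues
  set lam : G → ℂ := fun g => ∑ s ∈ S, χ g s with hlam
  set c : ℂ := Complex.I * (t : ℂ) with hc
  -- |e^{i t lam g}| = 1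
  have habs : ∀ g : G, ‖Complex.exp (c * lam g)‖ = 1 := by
    intro g
    obtain ⟨m, hm⟩ := hintegral g
    have hlg : lam g = (m : ℂ) := hm
    rw [hlg, hc, Complex.norm_exp]
    have hre : (Complex.I * (t : ℂ) * (m : ℂ)).re = 0 := by
      simp [Complex.mul_re, Complex.mul_im]
    rw [hre, Real.exp_zero]
  -- part 1
  have habs1 : ‖α + β‖ = 1 := by
    have h0 : χ a 0 = 1 := hmap0 a
    have := hG0 0 h0
    rw [← this]
    exact habs 0
  have hexists : ∃ g : G, χ a g = -1 := by
    by_contra h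
    push_neg at h
    have hall : ∀ g : G, χ a g = 1 := by
      intro g
      rcases hsq g with h1 | h1
      · exact h1
      · exact absurd h1 (h g)
    apply ha0
    apply χ.injective
    apply DFunLike.ext
    intro x
    rw [hall x, hχ0]
  have habs2 : ‖α - β‖ = 1 := by
    obtain ⟨g, hg⟩ := hexists
    have := hG1 g hg
    rw [← this]
    exact habs g
  have part1 : ‖α‖ ^ 2 + ‖β‖ ^ 2 = 1 := by
    have h1 : Complex.normSq (α + β) = 1 := by
      have := congrArg (· ^ 2) habs1
      simpa [Complex.sq_norm] using this
    have h2 : Complex.normSq (α - β) = 1 := by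
      have := congrArg (· ^ 2) habs2
      simpa [Complex.sq_norm] using this
    have g1 : ‖α‖ ^ 2 = Complex.normSq α := Complex.sq_norm α
    have g2 : ‖β‖ ^ 2 = Complex.normSq β := Complex.sq_norm β
    rw [g1, g2]
    simp only [Complex.normSq_apply, Complex.add_re, Complex.add_im, Complex.sub_re,
      Complex.sub_im] at h1 h2 ⊢
    nlinarith [h1, h2]
  -- matrices
  set n : ℂ := (Fintype.card G : ℂ) with hn
  have hn0 : n ≠ 0 := by
    rw [hn]
    exact_mod_cast Fintype.card_ne_zero
  set P : Matrix G G ℂ := Matrix.of (fun x g => χ g x) with hP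
  set B : Matrix G G ℂ := Matrix.of (fun g x => χ (-g) x) with hB
  set Q : Matrix G G ℂ := Matrix.of (fun g h : G => if h = g + a then (1 : ℂ) else 0) with hQ
  have hPB : P * B = n • 1 := by
    ext x y
    rw [Matrix.mul_apply]
    have key : ∀ g : G, P x g * B g y = χ (x - y) g := by
      intro g
      show χ g x * χ (-g) y = χ (x - y) g
      rw [hχsymm g x, hχsymm (-g) y, hnegswap y g, sub_eq_add_neg, hχmul]
    simp only [key]
    rw [hsum (x - y)]
    by_cases hxy : x = y
    · simp [hxy, Matrix.one_apply, hn]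
    · rw [if_neg (sub_ne_zero.mpr hxy)]
      simp [Matrix.one_apply, hxy]
  haveI : Invertible P := invertibleOfRightInverse P (n⁻¹ • B) (by
    rw [Matrix.mul_smul, hPB, smul_smul, inv_mul_cancel₀ hn0, one_smul])
  have hPPinv : P * P⁻¹ = 1 := by
    rw [← Matrix.invOf_eq_nonsing_inv]
    exact mul_invOf_self P
  -- A * P = P * diagonal lam
  have hAP : A * P = P * Matrix.diagonal lam := by
    ext x g
    rw [Matrix.mul_apply, Matrix.mul_diagonal]
    have step1 : ∑ h : G, A x h * P h g = ∑ h : G, if x - h ∈ S then χ g h else 0 := by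
      apply Finset.sum_congr rfl
      intro h _
      rw [hA]
      show (if x - h ∈ S then (1:ℂ) else 0) * χ g h = _
      by_cases hs : x - h ∈ S <;> simp [hs]
    rw [step1]
    have step2 : ∑ h : G, (if x - h ∈ S then χ g h else 0)
        = ∑ s : G, (if s ∈ S then χ g (x - s) else 0) := by
      apply Fintype.sum_equiv (Equiv.subLeft x)
      intro h
      simp [Equiv.subLeft, sub_sub_cancel]
    rw [step2, Finset.sum_ite_mem, Finset.univ_inter]
    have step3 : ∑ s ∈ S, χ g (x - s) = χ g x * ∑ s ∈ S, χ g (-s) := by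
      rw [Finset.mul_sum]
      apply Finset.sum_congr rfl
      intro s _
      rw [sub_eq_add_neg, hmadd]
    rw [step3]
    have step4 : ∑ s ∈ S, χ g (-s) = ∑ s ∈ S, χ g s := by
      apply Finset.sum_equiv (Equiv.neg G)
      · intro s
        simpa using hS s
      · intro s _
        simp
    rw [step4]
    show χ g x * lam g = P x g * lam g
    rfl
  have hAconj : A = P * Matrix.diagonal lam * P⁻¹ := by
    rw [← hAP, Matrix.mul_assoc, hPPinv, Matrix.mul_one]
  -- Q * P = P * diagonal (χ a ·)
  have hQP : Q * P = P * Matrix.diagonal (fun g => χ a g) := by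
    ext x g
    rw [Matrix.mul_apply, Matrix.mul_diagonal]
    have : ∑ h : G, Q x h * P h g = ∑ h : G, if h = x + a then χ g h else 0 := by
      apply Finset.sum_congr rfl
      intro h _
      show (if h = x + a then (1:ℂ) else 0) * χ g h = _
      by_cases hh : h = x + a <;> simp [hh]
    rw [this, Finset.sum_ite_eq' Finset.univ (x + a) (fun h => χ g h),
      if_pos (Finset.mem_univ _)]
    show χ g (x + a) = P x g * χ a g
    rw [hmadd]
    show χ g x * χ g a = χ g x * χ a g
    rw [hχsymm g a]
  have hQconj : Q = P * Matrix.diagonal (fun g => χ a g) * P⁻¹ := by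
    rw [← hQP, Matrix.mul_assoc, hPPinv, Matrix.mul_one]
  -- the exponential
  have hdsmul : c • Matrix.diagonal lam = Matrix.diagonal (fun g => c * lam g) := by
    ext i j
    by_cases hij : i = j
    · subst hij
      simp
    · simp [Matrix.diagonal_apply_ne _ hij]
  have hcA : c • A = P * Matrix.diagonal (fun g => c * lam g) * P⁻¹ := by
    rw [hAconj, ← Matrix.smul_mul, ← Matrix.mul_smul, hdsmul]
  have hexp : Ht = P * Matrix.diagonal (fun g => Complex.exp (c * lam g)) * P⁻¹ := by
    rw [hHt, hcA, Matrix.exp_conj P _ (isUnit_of_invertible P),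
      Matrix.exp_diagonal, Pi.exp_def]
    congr 2
    funext g
    rw [Complex.exp_eq_exp_ℂ]
  have hdiagval : (fun g => Complex.exp (c * lam g)) = fun g => α + β * χ a g := by
    funext g
    rcases hsq g with h1 | h1
    · rw [h1, mul_one]
      exact hG0 g h1
    · rw [h1]
      have h2 : Complex.exp (c * lam g) = α - β := hG1 g h1
      rw [h2]
      ring
  have hdiagsplit : Matrix.diagonal (fun g => α + β * χ a g)
      = α • (1 : Matrix G G ℂ) + β • Matrix.diagonal (fun g => χ a g) := by
    ext i j
    by_cases hij : i = j
    · subst hij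
      simp [Matrix.diagonal_apply_eq, Matrix.one_apply_eq]
    · simp [Matrix.diagonal_apply_ne _ hij, Matrix.one_apply_ne hij]
  have part2 : Ht = α • (1 : Matrix G G ℂ) + β • Q := by
    rw [hexp, hdiagval, hdiagsplit, Matrix.mul_add, Matrix.add_mul,
      Matrix.mul_smul, Matrix.smul_mul, Matrix.mul_smul, Matrix.smul_mul,
      Matrix.mul_one, hPPinv, ← hQconj]
  have hQvec : ∀ x : G, Q *ᵥ (Pi.single x 1 : G → ℂ) = Pi.single (x + a) 1 := by
    intro x
    funext g
    have hiff : x = g + a ↔ g = x + a :=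
      ⟨fun h => by rw [h, add_assoc, haa, add_zero],
       fun h => by rw [h, add_assoc, haa, add_zero]⟩
    rw [Matrix.mulVec_single]
    show Q g x * 1 = (Pi.single (x + a) 1 : G → ℂ) g
    rw [mul_one, Pi.single_apply]
    show (if x = g + a then (1 : ℂ) else 0) = _
    rw [if_congr hiff rfl rfl]
  refine ⟨part1, part2, ?_⟩
  intro x
  rw [part2, Matrix.add_mulVec, Matrix.smul_mulVec, Matrix.smul_mulVec,
    Matrix.one_mulVec, hQvec]
end

section
/- Let G be a finite abelian group of order n and Cay(G,S) an integral Cayley graph with all eigenvalues λ_g ∈ ℤ, and fix a ∈ G of order 2, g_1 ∈ G_1, an element z ∈ S with z ≠ 0, a. Define M_0 = gcd(|S| - λ_g : g ∈ G_0), M_1 = gcd(λ_{g_1} - λ_g : g ∈ G_1), M = gcd(M_0, M_1). Then M divides n. -/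
/-!
Write `n = |G|`. Since `z ∈ S`, orthogonality of characters gives `∑_g λ_g χ_g(-z) = n`.
On `G₀` resp. `G₁` the function `χ_a` is `1` resp. `-1`, so any function `b` constant on
`G₀` and on `G₁` is a combination of `1` and `χ_a`, and `∑_g b_g χ_g(-z) = 0` because
`-z ≠ 0` and `a - z ≠ 0`. Choosing `b = |S|` on `G₀` and `b = λ_{g₁}` on `G₁` gives
`n = ∑_g (λ_g - b_g) χ_g(-z)`, where every coefficient is a multiple of `M` and every
character value is an algebraic integer. Hence `n / M` is a rational algebraic integer,
so an integer.
-/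

open Finset

theorem AddChar.isIntegral_apply {A R : Type*} [AddGroup A] [Fintype A] [CommRing R]
    (ψ : AddChar A R) (x : A) : IsIntegral ℤ (ψ x) :=
  IsIntegral.of_pow Fintype.card_pos <| by
    rw [← map_nsmul_eq_pow, card_nsmul_eq_zero, map_zero_eq_one]
    exact isIntegral_one

theorem Int.dvd_of_cast_eq_mul_isIntegral {K : Type*} [Field K] [CharZero K] {m n : ℤ} {α : K}
    (hα : IsIntegral ℤ α) (h : (n : K) = m * α) : m ∣ n := by
  rcases eq_or_ne m 0 with rfl | hm
  · simpa using h
  have hαq : α = algebraMap ℚ K (n / m) := by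
    rw [map_div₀, map_intCast, map_intCast, h]
    field_simp
  rw [hαq, isIntegral_algebraMap_iff (algebraMap ℚ K).injective] at hα
  obtain ⟨k, hk⟩ := IsIntegrallyClosed.isIntegral_iff.1 hα
  refine ⟨k, ?_⟩
  qify
  rw [eq_intCast] at hk
  rw [hk, mul_div_cancel₀ _ (by exact_mod_cast hm)]

theorem Int.dvd_of_cast_eq_sum_mul_isIntegral {K ι : Type*} [Field K] [CharZero K] [Fintype ι]
    {m n : ℤ} {c : ι → ℤ} {x : ι → K} (hc : ∀ i, m ∣ c i) (hx : ∀ i, IsIntegral ℤ (x i))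
    (h : (n : K) = ∑ i, c i * x i) : m ∣ n := by
  choose d hd using hc
  refine Int.dvd_of_cast_eq_mul_isIntegral (α := ∑ i, d i * x i)
    (IsIntegral.sum _ fun i _ => (isIntegral_intCast _).mul (hx i)) ?_
  simp only [h, hd, Int.cast_mul, mul_sum, mul_assoc]

section SymmetricCharacterPairing

variable {G : Type*} [AddCommGroup G] {χ : G ≃ AddChar G ℂ}

theorem charEquiv_zero (hχ : ∀ g h, χ g h = χ h g) : χ 0 = 0 := by
  ext x
  rw [hχ, AddChar.map_zero_eq_one, AddChar.zero_apply]

theorem sum_charEquiv_apply [Fintype G] [DecidableEq G] (hχ : ∀ g h, χ g h = χ h g) (w : G) :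
    ∑ g, χ g w = if w = 0 then (Fintype.card G : ℂ) else 0 := by
  simp_rw [hχ _ w]
  rw [AddChar.sum_eq_ite]
  exact if_congr (by rw [← charEquiv_zero hχ]; exact χ.injective.eq_iff) rfl rfl

theorem sum_sum_mul_charEquiv_apply_neg [Fintype G] (hχ : ∀ g h, χ g h = χ h g)
    {S : Finset G} {z : G} (hz : z ∈ S) : ∑ g, (∑ s ∈ S, χ g s) * χ g (-z) = Fintype.card G := by
  classical
  simp_rw [sum_mul, ← AddChar.map_add_eq_mul]
  rw [sum_comm]
  simp_rw [sum_charEquiv_apply hχ, add_neg_eq_zero]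
  simp [hz]

theorem charEquiv_apply_eq_one_or_eq_neg_one (hχ : ∀ g h, χ g h = χ h g) {a : G}
    (ha : 2 • a = 0) (g : G) : χ a g = 1 ∨ χ a g = -1 := by
  rw [← sq_eq_one_iff, hχ, ← AddChar.map_nsmul_eq_pow, ha, AddChar.map_zero_eq_one]

theorem sum_ite_mul_charEquiv_apply_eq_zero [Fintype G] (hχ : ∀ g h, χ g h = χ h g) {a w : G}
    (ha : 2 • a = 0) (A B : ℂ) (hw : w ≠ 0) (haw : a + w ≠ 0) :
    ∑ g, (if χ a g = 1 then A else B) * χ g w = 0 := by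
  classical
  have hsplit : ∀ g, (if χ a g = 1 then A else B) * χ g w
      = (A + B) / 2 * χ g w + (A - B) / 2 * χ g (a + w) := by
    intro g
    rw [AddChar.map_add_eq_mul, hχ g a]
    rcases charEquiv_apply_eq_one_or_eq_neg_one hχ ha g with h | h <;> norm_num [h] <;> ring
  simp_rw [hsplit, sum_add_distrib, ← mul_sum, sum_charEquiv_apply hχ, if_neg hw, if_neg haw,
    mul_zero, add_zero]

end SymmetricCharacterPairing

theorem gcd_eigenvalue_differences_dvd_card_general
    (G : Type) [AddCommGroup G] [Fintype G]
    (χ : G ≃ AddChar G ℂ)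
    (hχsymm : ∀ g h : G, χ g h = χ h g)
    (a : G) (ha : addOrderOf a = 2)
    (S : Finset G)
    (lam : G → ℤ) (hlam : ∀ g : G, ((lam g : ℂ)) = ∑ s ∈ S, χ g s)
    (g₁ : G)
    (z : G) (hzS : z ∈ S) (hz0 : z ≠ 0) (hza : z ≠ a)
    (M₀ M₁ M : ℤ)
    (hM₀ : M₀ = (Finset.univ.filter (fun g : G => χ a g = 1)).gcd
      (fun g => (S.card : ℤ) - lam g))
    (hM₁ : M₁ = (Finset.univ.filter (fun g : G => χ a g = -1)).gcd
      (fun g => lam g₁ - lam g))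
    (hM : M = gcd M₀ M₁) :
    M ∣ (Fintype.card G : ℤ) := by
  have ha2 : 2 • a = 0 := ha ▸ addOrderOf_nsmul_eq_zero a
  let b : G → ℤ := fun g => if χ a g = 1 then (S.card : ℤ) else lam g₁
  refine Int.dvd_of_cast_eq_sum_mul_isIntegral (c := fun g => lam g - b g)
    (x := fun g => χ g (-z)) (fun g => ?_) (fun g => (χ g).isIntegral_apply _) ?_
  · rcases charEquiv_apply_eq_one_or_eq_neg_one hχsymm ha2 g with h | h
    · have hdvd : M₀ ∣ (S.card : ℤ) - lam g := hM₀ ▸ gcd_dvd (mem_filter.2 ⟨mem_univ g, h⟩)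
      simpa [b, h] using dvd_sub_comm.1 ((hM ▸ gcd_dvd_left M₀ M₁).trans hdvd)
    · have hdvd : M₁ ∣ lam g₁ - lam g := hM₁ ▸ gcd_dvd (mem_filter.2 ⟨mem_univ g, h⟩)
      have hne : χ a g ≠ 1 := by norm_num [h]
      simpa [b, hne] using dvd_sub_comm.1 ((hM ▸ gcd_dvd_right M₀ M₁).trans hdvd)
  · have hb : ∑ g, (b g : ℂ) * χ g (-z) = 0 := by
      simpa [b, apply_ite (Int.cast : ℤ → ℂ)] using
        sum_ite_mul_charEquiv_apply_eq_zero hχsymm ha2 (S.card : ℂ) (lam g₁)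
          (neg_ne_zero.2 hz0) (fun h => hza (add_neg_eq_zero.1 h).symm)
    calc ((Fintype.card G : ℤ) : ℂ)
        = ∑ g, (lam g : ℂ) * χ g (-z) - ∑ g, (b g : ℂ) * χ g (-z) := by
          simp_rw [hb, sub_zero, hlam]
          exact_mod_cast (sum_sum_mul_charEquiv_apply_neg hχsymm hzS).symm
      _ = ∑ g, ((lam g - b g : ℤ) : ℂ) * χ g (-z) := by
          simp_rw [← sum_sub_distrib, Int.cast_sub, sub_mul]

/-- Lemma 2.3: for an integral abelian Cayley graph, the gcd `M` of the
eigenvalue differences `|S| - λ_g` over `G₀` and `λ_{g₁} - λ_g` over `G₁`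
divides `n = |G|`. -/
theorem gcd_eigenvalue_differences_dvd_card
    (G : Type) [AddCommGroup G] [Fintype G] [DecidableEq G]
    (χ : G ≃ AddChar G ℂ)
    (hχmul : ∀ g₁ g₂ x : G, χ (g₁ + g₂) x = χ g₁ x * χ g₂ x)
    (hχ0 : ∀ x : G, χ 0 x = 1)
    (hχsymm : ∀ g h : G, χ g h = χ h g)
    (a : G) (ha : addOrderOf a = 2)
    (S : Finset G) (hS : ∀ s : G, s ∈ S ↔ -s ∈ S)
    (lam : G → ℤ) (hlam : ∀ g : G, ((lam g : ℂ)) = ∑ s ∈ S, χ g s)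
    (g₁ : G) (hg₁ : χ a g₁ = -1)
    (z : G) (hzS : z ∈ S) (hz0 : z ≠ 0) (hza : z ≠ a)
    (M₀ M₁ M : ℤ)
    (hM₀ : M₀ = (Finset.univ.filter (fun g : G => χ a g = 1)).gcd
      (fun g => (S.card : ℤ) - lam g))
    (hM₁ : M₁ = (Finset.univ.filter (fun g : G => χ a g = -1)).gcd
      (fun g => lam g₁ - lam g))
    (hM : M = gcd M₀ M₁) :
    M ∣ (Fintype.card G : ℤ) :=
  gcd_eigenvalue_differences_dvd_card_general G χ hχsymm a ha S lam hlam g₁ z hzS hz0 hza M₀ M₁ M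
    hM₀ hM₁ hM
end

section
/- Let p be a prime, r ≥ 1, G = ℤ_2 × ℤ_{p^r} × H with H a finite abelian group of order m, and S = {(0,ℓ,h) : 1 ≤ ℓ ≤ p^r - 1, gcd(ℓ,p)=1, h ∈ H} ∪ {(1,0,0)}. Then the eigenvalues λ_{x,y,z} of Cay(G,S) are given by: λ_{x,y,z} = (-1)^x + p^{r-1}(p-1)m if y = 0 and z = 0; λ_{x,y,z} = (-1)^x - p^{r-1}m if v_p(y) = r-1 (y ≠ 0) and z = 0; and λ_{x,y,z} = (-1)^x otherwise. -/
open Real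


lemma geom_root_sum (n k : ℕ) (hn : 0 < n) :
    ∑ i ∈ Finset.range n, (Complex.exp (2 * (π:ℂ) * Complex.I * k / n)) ^ i
      = if n ∣ k then (n:ℂ) else 0 := by
  have hn' : (n:ℂ) ≠ 0 := Nat.cast_ne_zero.mpr hn.ne'
  set ζ : ℂ := Complex.exp (2 * (π:ℂ) * Complex.I * k / n) with hζdef
  by_cases h : n ∣ k
  · obtain ⟨c, hk⟩ := h
    have hζ : ζ = 1 := by
      rw [hζdef]
      have : 2 * (π:ℂ) * Complex.I * k / n = (c:ℤ) * (2*(π:ℂ)*Complex.I) := by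
        rw [hk]; push_cast; field_simp
      rw [this, Complex.exp_int_mul_two_pi_mul_I]
    simp [hζ, show n ∣ k from ⟨c, hk⟩]
  · have h2 : (2*(π:ℂ)*Complex.I) ≠ 0 := by
      simp [Real.pi_ne_zero, Complex.I_ne_zero, Complex.ofReal_ne_zero]
    have hζ1 : ζ ≠ 1 := by
      intro hζ
      rw [hζdef, Complex.exp_eq_one_iff] at hζ
      obtain ⟨c, hc⟩ := hζ
      apply h
      have hc' : 2*(π:ℂ)*Complex.I * k = (c:ℂ) * (2*(π:ℂ)*Complex.I) * n := by
        field_simp at hc; linear_combination (2*(π:ℂ)*Complex.I) * hc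
      have hc2 : (2*(π:ℂ)*Complex.I) * k = (2*(π:ℂ)*Complex.I) * ((c:ℂ)*n) := by
        linear_combination hc'
      have : (k:ℂ) = (c:ℂ) * n := mul_left_cancel₀ h2 hc2
      have hk : (k:ℤ) = c * n := by exact_mod_cast this
      exact Int.ofNat_dvd.mp ⟨c, by rw [hk, Int.mul_comm]⟩
    rw [geom_sum_eq hζ1]
    have hζn : ζ ^ n = 1 := by
      rw [hζdef, ← Complex.exp_nat_mul]
      have : (n:ℂ) * (2 * (π:ℂ) * Complex.I * k / n) = (k:ℤ) * (2*(π:ℂ)*Complex.I) := by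
        push_cast; field_simp
      rw [this, Complex.exp_int_mul_two_pi_mul_I]
    simp [hζn, h]

lemma zmod_sum_val (n : ℕ) [NeZero n] (f : ℕ → ℂ) :
    ∑ v : ZMod n, f v.val = ∑ i ∈ Finset.range n, f i :=
  Finset.sum_nbij' (fun v : ZMod n => v.val) (fun i => (i : ZMod n))
    (fun v _ => Finset.mem_range.mpr (ZMod.val_lt v))
    (fun _ _ => Finset.mem_univ _)
    (fun v _ => ZMod.natCast_zmod_val v)
    (fun i hi => ZMod.val_cast_of_lt (Finset.mem_range.mp hi))
    (fun _ _ => rfl)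

/-- eigenvalues of the Cayley graph on `ℤ₂ × ℤ_{p^r} × H` with
connection set `S = {(0,ℓ,h) : gcd(ℓ,p)=1, h ∈ H} ∪ {(1,0,0)}`. -/
theorem eigenvalues_Z2_Zpr_H
    (p : ℕ) (hp : p.Prime) (r : ℕ) (hr : 1 ≤ r) [NeZero (p ^ r)]
    (H : Type) [AddCommGroup H] [Fintype H] [DecidableEq H]
    (m : ℕ) (hm : Fintype.card H = m)
    (ψ : H ≃ AddChar H ℂ) (hψ0 : ∀ w : H, ψ 0 w = 1)
    (S : Finset (ZMod 2 × ZMod (p ^ r) × H))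
    (hS : S = (({0} : Finset (ZMod 2)) ×ˢ
        ((Finset.univ.filter (fun v : ZMod (p ^ r) => ¬ p ∣ v.val)) ×ˢ
          (Finset.univ : Finset H))) ∪ {((1 : ZMod 2), (0 : ZMod (p ^ r)), (0 : H))})
    (lam : ZMod 2 → ZMod (p ^ r) → H → ℂ)
    (hlam : ∀ (x : ZMod 2) (y : ZMod (p ^ r)) (z : H), lam x y z =
      ∑ s ∈ S, ((-1 : ℂ) ^ (x.val * s.1.val) *
        Complex.exp (2 * (π : ℂ) * Complex.I *
          ((y.val : ℂ) * (s.2.1.val : ℂ)) / ((p : ℂ) ^ r)) * ψ z s.2.2)) :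
    ∀ (x : ZMod 2) (y : ZMod (p ^ r)) (z : H),
      (y = 0 ∧ z = 0 →
        lam x y z = (-1 : ℂ) ^ x.val + (p : ℂ) ^ (r - 1) * ((p : ℂ) - 1) * (m : ℂ)) ∧
      (y ≠ 0 ∧ (p : ℕ) ^ (r - 1) ∣ y.val ∧ z = 0 →
        lam x y z = (-1 : ℂ) ^ x.val - (p : ℂ) ^ (r - 1) * (m : ℂ)) ∧
      ((z ≠ 0 ∨ ¬ (p : ℕ) ^ (r - 1) ∣ y.val) →
        lam x y z = (-1 : ℂ) ^ x.val) := by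
  intro x y z
  have hppos : 0 < p := hp.pos
  have hp0 : (p:ℂ) ≠ 0 := Nat.cast_ne_zero.mpr hppos.ne'
  have hprpos : 0 < p ^ r := pow_pos hppos r
  have hpr1pos : 0 < p ^ (r-1) := pow_pos hppos (r-1)
  have hsplit : p ^ r = p ^ (r-1) * p := by
    conv_lhs => rw [show r = (r-1)+1 by omega]
    rw [pow_succ]
  have hsplitC : (p:ℂ) ^ r = (p:ℂ) ^ (r-1) * p := by
    conv_lhs => rw [show r = (r-1)+1 by omega]
    rw [pow_succ]
  -- the character sum over H
  have hΨ : ∑ h : H, ψ z h = (if z = 0 then (m:ℂ) else 0) := by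
    by_cases hz : z = 0
    · subst hz
      simp only [hψ0, Finset.sum_const, Finset.card_univ, hm, if_true]
      simp
    · rw [if_neg hz]
      apply AddChar.sum_eq_zero_of_ne_one
      intro h1
      apply hz
      have h0 : ψ 0 = (1 : AddChar H ℂ) := by
        ext w; simpa using hψ0 w
      exact ψ.injective (h1.trans h0.symm)
  -- the full sum over ZMod (p^r)
  have hfull : ∑ v : ZMod (p^r),
      Complex.exp (2 * (π:ℂ) * Complex.I * ((y.val : ℂ) * (v.val : ℂ)) / (p:ℂ)^r)
      = (if y = 0 then ((p:ℂ))^r else 0) := by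
    have heq : ∀ v : ZMod (p^r),
        Complex.exp (2 * (π:ℂ) * Complex.I * ((y.val : ℂ) * (v.val : ℂ)) / (p:ℂ)^r)
        = (Complex.exp (2 * (π:ℂ) * Complex.I * (y.val : ℂ) / ((p^r : ℕ) : ℂ))) ^ v.val := by
      intro v
      rw [← Complex.exp_nat_mul]
      congr 1
      push_cast
      field_simp
    simp_rw [heq]
    rw [zmod_sum_val (p^r) (fun i => (Complex.exp (2 * (π:ℂ) * Complex.I * (y.val : ℂ) / ((p^r : ℕ) : ℂ))) ^ i)]
    rw [geom_root_sum (p^r) y.val hprpos]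
    have : p ^ r ∣ y.val ↔ y = 0 := by
      constructor
      · intro hd
        have := ZMod.val_lt y
        have : y.val = 0 := Nat.eq_zero_of_dvd_of_lt hd this
        exact (ZMod.val_eq_zero y).mp this
      · rintro rfl; simp [ZMod.val_zero]
    rw [if_congr this rfl rfl]
    split <;> push_cast <;> ring
  -- the sum over multiples of p
  have hmult : ∑ v ∈ Finset.univ.filter (fun v : ZMod (p^r) => p ∣ v.val),
      Complex.exp (2 * (π:ℂ) * Complex.I * ((y.val : ℂ) * (v.val : ℂ)) / (p:ℂ)^r)
      = (if p^(r-1) ∣ y.val then ((p:ℂ))^(r-1) else 0) := by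
    have step : ∑ v ∈ Finset.univ.filter (fun v : ZMod (p^r) => p ∣ v.val),
        Complex.exp (2 * (π:ℂ) * Complex.I * ((y.val : ℂ) * (v.val : ℂ)) / (p:ℂ)^r)
        = ∑ i ∈ Finset.range (p^(r-1)),
          (Complex.exp (2 * (π:ℂ) * Complex.I * (y.val:ℂ) / ((p^(r-1) : ℕ) : ℂ))) ^ i := by
      apply Finset.sum_nbij' (fun v : ZMod (p^r) => v.val / p)
        (fun i => ((p * i : ℕ) : ZMod (p^r)))
      · intro v hv
        rw [Finset.mem_filter] at hv
        obtain ⟨-, c, hc⟩ := hv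
        have := ZMod.val_lt v
        apply Finset.mem_range.mpr
        rw [hc, Nat.mul_div_cancel_left c hppos]
        rw [hc, hsplit, mul_comm (p^(r-1)) p] at this
        exact lt_of_mul_lt_mul_left this (Nat.zero_le p)
      · intro i hi
        rw [Finset.mem_range] at hi
        have hlt : p * i < p ^ r := by
          rw [hsplit, mul_comm (p^(r-1)) p]
          exact (Nat.mul_lt_mul_left hppos).mpr hi
        rw [Finset.mem_filter]
        refine ⟨Finset.mem_univ _, ?_⟩
        rw [ZMod.val_cast_of_lt hlt]
        exact Dvd.intro i rfl
      · intro v hv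
        rw [Finset.mem_filter] at hv
        obtain ⟨-, hd⟩ := hv
        rw [Nat.mul_div_cancel' hd, ZMod.natCast_zmod_val]
      · intro i hi
        rw [Finset.mem_range] at hi
        have hlt : p * i < p ^ r := by
          rw [hsplit, mul_comm (p^(r-1)) p]
          exact (Nat.mul_lt_mul_left hppos).mpr hi
        rw [ZMod.val_cast_of_lt hlt, Nat.mul_div_cancel_left i hppos]
      · intro v hv
        rw [Finset.mem_filter] at hv
        obtain ⟨-, c, hc⟩ := hv
        rw [← Complex.exp_nat_mul]
        congr 1
        rw [hc, Nat.mul_div_cancel_left c hppos]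
        push_cast
        rw [hsplitC]
        field_simp
    rw [step, geom_root_sum (p^(r-1)) y.val hpr1pos]
    split <;> push_cast <;> ring
  -- main key identity
  have key : lam x y z = (-1:ℂ)^x.val +
      ((if y = 0 then ((p:ℂ))^r else 0) - (if p^(r-1) ∣ y.val then ((p:ℂ))^(r-1) else 0)) *
      (if z = 0 then (m:ℂ) else 0) := by
    rw [hlam, hS]
    have hnotmem : ((1 : ZMod 2), (0 : ZMod (p ^ r)), (0 : H)) ∉
        (({0} : Finset (ZMod 2)) ×ˢ
          ((Finset.univ.filter (fun v : ZMod (p ^ r) => ¬ p ∣ v.val)) ×ˢ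
            (Finset.univ : Finset H))) := by
      simp only [Finset.mem_product, Finset.mem_singleton]
      intro h
      exact absurd h.1 (by decide)
    rw [Finset.sum_union (Finset.disjoint_singleton_right.mpr hnotmem)]
    rw [Finset.sum_singleton]
    have h1val : (1 : ZMod 2).val = 1 := rfl
    have h0val2 : (0 : ZMod 2).val = 0 := rfl
    have hsing : ((-1 : ℂ) ^ (x.val * (1 : ZMod 2).val) *
        Complex.exp (2 * (π : ℂ) * Complex.I *
          ((y.val : ℂ) * (((0 : ZMod (p^r)).val : ℕ) : ℂ)) / ((p : ℂ) ^ r)) *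
        ψ z (0 : H)) = (-1:ℂ)^x.val := by
      rw [h1val, mul_one, ZMod.val_zero, AddChar.map_zero_eq_one]
      norm_num
    rw [Finset.sum_product, Finset.sum_singleton, Finset.sum_product]
    simp only [h0val2, Nat.mul_zero, pow_zero, one_mul]
    rw [hsing]
    have hrw : ∀ v : ZMod (p^r), ∑ h : H,
        Complex.exp (2 * (π:ℂ) * Complex.I * ((y.val : ℂ) * (v.val : ℂ)) / (p:ℂ)^r) * ψ z h
        = Complex.exp (2 * (π:ℂ) * Complex.I * ((y.val : ℂ) * (v.val : ℂ)) / (p:ℂ)^r) *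
          (if z = 0 then (m:ℂ) else 0) := by
      intro v
      rw [← Finset.mul_sum, hΨ]
    simp_rw [hrw, ← Finset.sum_mul]
    have hsplitsum : ∑ v ∈ Finset.univ.filter (fun v : ZMod (p^r) => ¬ p ∣ v.val),
        Complex.exp (2 * (π:ℂ) * Complex.I * ((y.val : ℂ) * (v.val : ℂ)) / (p:ℂ)^r)
        = (if y = 0 then ((p:ℂ))^r else 0) - (if p^(r-1) ∣ y.val then ((p:ℂ))^(r-1) else 0) := by
      have := Finset.sum_filter_add_sum_filter_not Finset.univ
        (fun v : ZMod (p^r) => p ∣ v.val)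
        (fun v : ZMod (p^r) =>
          Complex.exp (2 * (π:ℂ) * Complex.I * ((y.val : ℂ) * (v.val : ℂ)) / (p:ℂ)^r))
      rw [hmult] at this
      rw [← hfull, ← this]
      ring
    rw [hsplitsum]
    ring
  refine ⟨?_, ?_, ?_⟩
  · rintro ⟨rfl, rfl⟩
    rw [key]
    have hd : p^(r-1) ∣ (0 : ZMod (p^r)).val := by simp [ZMod.val_zero]
    rw [if_pos rfl, if_pos hd, if_pos rfl, hsplitC]
    ring
  · rintro ⟨hy, hd, rfl⟩
    rw [key, if_neg hy, if_pos hd, if_pos rfl]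
    ring
  · rintro (hz | hd)
    · rw [key, if_neg hz]
      ring
    · have hy : y ≠ 0 := by
        rintro rfl
        exact hd (by simp [ZMod.val_zero])
      rw [key, if_neg hy, if_neg hd]
      ring
end

section
/- Let p be a prime, r ≥ 1, G = ℤ_2 × ℤ_{p^r} × H with |H| = m, and S = {(0,ℓ,h) : gcd(ℓ,p)=1, 1≤ℓ≤p^r-1, h∈H} ∪ {(1,0,0)}. If p^{r-1}m ∉ {1,2,4}, then Cay(G,S) has (cos(2π/(p^{r-1}m)), i·sin(2π/(p^{r-1}m)))-fractional revival between (x,y,z) and (x+1,y,z) for every (x,y,z) ∈ G at time t = 2π/(p^{r-1}m). -/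
open Matrix Real



open Matrix Real

section Aux

/-! ### Exponential of a matrix acting on an "eigenmatrix" -/

theorem exp_mul_eigen_alg {𝔸 : Type*} [NormedRing 𝔸] [NormedAlgebra ℂ 𝔸] [CompleteSpace 𝔸]
    (M E : 𝔸) (μ : ℂ) (h : M * E = μ • E) :
    NormedSpace.exp M * E = Complex.exp μ • E := by
  have hpow : ∀ n : ℕ, M ^ n * E = (μ ^ n) • E := by
    intro n; induction n with
    | zero => simp
    | succ n ih => rw [pow_succ, mul_assoc, h, mul_smul_comm, ih, smul_smul, pow_succ, mul_comm]
  have hsum := NormedSpace.expSeries_summable' (𝕂 := ℂ) (x := M)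
  rw [NormedSpace.exp_eq_tsum (𝕂 := ℂ), ← hsum.tsum_mul_right E]
  have h2 : ∀ n : ℕ, (((n.factorial : ℂ))⁻¹ • M ^ n) * E = (((n.factorial : ℂ))⁻¹ * μ ^ n) • E := by
    intro n; rw [smul_mul_assoc, hpow, smul_smul]
  simp_rw [h2]
  have hsum2 : Summable fun n : ℕ => ((n.factorial : ℂ))⁻¹ * μ ^ n := by
    simpa [smul_eq_mul] using NormedSpace.expSeries_summable' (𝕂 := ℂ) (x := μ)
  rw [hsum2.tsum_smul_const]
  congr 1
  rw [Complex.exp_eq_exp_ℂ, NormedSpace.exp_eq_tsum (𝕂 := ℂ)]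
  simp [smul_eq_mul]

theorem matrix_exp_mul_eigen {n : Type*} [Fintype n] [DecidableEq n]
    (M E : Matrix n n ℂ) (μ : ℂ) (h : M * E = μ • E) :
    NormedSpace.exp M * E = Complex.exp μ • E := by
  letI : SeminormedRing (Matrix n n ℂ) := Matrix.linftyOpSemiNormedRing
  letI : NormedRing (Matrix n n ℂ) := Matrix.linftyOpNormedRing
  letI : NormedAlgebra ℂ (Matrix n n ℂ) := Matrix.linftyOpNormedAlgebra
  exact exp_mul_eigen_alg M E μ h

/-! ### Cayley matrices and convolution -/

noncomputable def cay {G : Type*} [AddCommGroup G] (f : G → ℂ) : Matrix G G ℂ :=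
  Matrix.of fun g h => f (g - h)

noncomputable def cv {G : Type*} [AddCommGroup G] [Fintype G] (f g : G → ℂ) : G → ℂ :=
  fun x => ∑ y, f (x - y) * g y

theorem cay_mul {G : Type*} [AddCommGroup G] [Fintype G] [DecidableEq G] (f g : G → ℂ) :
    cay f * cay g = cay (cv f g) := by
  ext a b
  simp only [cay, cv, Matrix.mul_apply, Matrix.of_apply]
  refine Fintype.sum_equiv (Equiv.subRight b) _ _ fun k => ?_
  simp only [Equiv.subRight_apply, sub_sub_sub_cancel_right]

theorem cv_comm {G : Type*} [AddCommGroup G] [Fintype G] (f g : G → ℂ) : cv f g = cv g f := by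
  funext x
  refine Fintype.sum_equiv (Equiv.subLeft x) _ _ fun y => ?_
  simp only [Equiv.subLeft_apply, sub_sub_cancel, mul_comm]

theorem cv_prod {G₁ G₂ : Type*} [AddCommGroup G₁] [Fintype G₁]
    [AddCommGroup G₂] [Fintype G₂]
    (f₁ g₁ : G₁ → ℂ) (f₂ g₂ : G₂ → ℂ) :
    cv (fun x : G₁ × G₂ => f₁ x.1 * f₂ x.2) (fun x => g₁ x.1 * g₂ x.2) =
      fun x => cv f₁ g₁ x.1 * cv f₂ g₂ x.2 := by
  funext x
  simp only [cv, Fintype.sum_prod_type, Prod.fst_sub, Prod.snd_sub]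
  rw [Finset.sum_mul_sum]
  exact Finset.sum_congr rfl fun y₁ _ => Finset.sum_congr rfl fun y₂ _ => by ring

/-! ### Counting in `ZMod (p ^ r)` -/

theorem card_ker_aux (p : ℕ) (hp : p.Prime) (r : ℕ) (hr : 1 ≤ r) [NeZero (p ^ r)] :
    (Finset.univ.filter fun b : ZMod (p ^ r) => p ∣ b.val).card = p ^ (r - 1) := by
  classical
  haveI : NeZero (p ^ (r - 1)) := ⟨pow_ne_zero _ hp.pos.ne'⟩
  have hr' : r - 1 + 1 = r := by omega
  have hinj : Function.Injective
      (fun j : ZMod (p ^ (r - 1)) => ((p * j.val : ℕ) : ZMod (p ^ r))) := by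
    intro j j' hjj
    have hlt : ∀ k : ZMod (p ^ (r - 1)), p * k.val < p ^ r := by
      intro k
      calc p * k.val < p * p ^ (r - 1) := (Nat.mul_lt_mul_left hp.pos).mpr k.val_lt
        _ = p ^ r := by rw [← pow_succ', hr']
    have := congrArg ZMod.val hjj
    rw [ZMod.val_cast_of_lt (hlt j), ZMod.val_cast_of_lt (hlt j')] at this
    exact ZMod.val_injective _ (Nat.eq_of_mul_eq_mul_left hp.pos this)
  have himg : (Finset.univ.filter fun b : ZMod (p ^ r) => p ∣ b.val)
      = Finset.univ.image (fun j : ZMod (p ^ (r - 1)) => ((p * j.val : ℕ) : ZMod (p ^ r))) := by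
    ext b
    simp only [Finset.mem_filter, Finset.mem_univ, true_and, Finset.mem_image]
    constructor
    · rintro ⟨c, hc⟩
      have hlt : c < p ^ (r - 1) := by
        by_contra hge
        push_neg at hge
        have : p ^ r ≤ p * c := by
          calc p ^ r = p * p ^ (r - 1) := by rw [← pow_succ', hr']
            _ ≤ p * c := Nat.mul_le_mul_left p hge
        have := b.val_lt
        omega
      refine ⟨(c : ZMod (p ^ (r - 1))), ?_⟩
      rw [ZMod.val_cast_of_lt hlt, ← hc, ZMod.natCast_val, ZMod.cast_id]
    · rintro ⟨j, rfl⟩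
      have hlt : p * j.val < p ^ r := by
        calc p * j.val < p * p ^ (r - 1) := (Nat.mul_lt_mul_left hp.pos).mpr j.val_lt
          _ = p ^ r := by rw [← pow_succ', hr']
      rw [ZMod.val_cast_of_lt hlt]
      exact dvd_mul_right p j.val
  rw [himg, Finset.card_image_of_injective _ hinj, Finset.card_univ, ZMod.card]

theorem dvd_val_iff_aux (p : ℕ) (hp : p.Prime) (r : ℕ) (hr : 1 ≤ r) [NeZero (p ^ r)]
    (b : ZMod (p ^ r)) :
    p ∣ b.val ↔ ZMod.castHom (dvd_pow_self p (by omega : r ≠ 0)) (ZMod p) b = 0 := by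
  haveI : NeZero p := ⟨hp.pos.ne'⟩
  rw [ZMod.castHom_apply, ← ZMod.natCast_val, ZMod.natCast_eq_zero_iff]

section ZModConv
variable (p : ℕ) (hp : p.Prime) (r : ℕ) (hr : 1 ≤ r) [NeZero (p ^ r)]
include hp hr

theorem sum_w :
    ∑ y : ZMod (p ^ r), (if p ∣ y.val then (1:ℂ) else 0) = (p:ℂ) ^ (r - 1) := by
  rw [Finset.sum_boole, card_ker_aux p hp r hr]
  push_cast; ring

theorem sum_w' (x : ZMod (p ^ r)) :
    ∑ y : ZMod (p ^ r), (if p ∣ (x - y).val then (1:ℂ) else 0) = (p:ℂ) ^ (r - 1) := by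
  rw [Fintype.sum_equiv (Equiv.subLeft x) _ (fun y => if p ∣ y.val then (1:ℂ) else 0)
    (fun y => by simp)]
  exact sum_w p hp r hr

theorem sum_ww (x : ZMod (p ^ r)) :
    ∑ y : ZMod (p ^ r), (if p ∣ (x - y).val then (1:ℂ) else 0) * (if p ∣ y.val then (1:ℂ) else 0)
      = if p ∣ x.val then (p:ℂ) ^ (r - 1) else 0 := by
  classical
  have hdvd : ∀ b : ZMod (p ^ r), p ∣ b.val ↔
      ZMod.castHom (dvd_pow_self p (by omega : r ≠ 0)) (ZMod p) b = 0 :=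
    fun b => dvd_val_iff_aux p hp r hr b
  by_cases hx : p ∣ x.val
  · have key : ∀ y : ZMod (p ^ r),
        (if p ∣ (x - y).val then (1:ℂ) else 0) * (if p ∣ y.val then (1:ℂ) else 0)
        = if p ∣ y.val then (1:ℂ) else 0 := by
      intro y
      by_cases hy : p ∣ y.val
      · have hxy : p ∣ (x - y).val := by
          rw [hdvd] at hx hy ⊢
          rw [map_sub, hx, hy, sub_zero]
        simp [hxy, hy]
      · simp [hy]
    simp_rw [key]
    rw [sum_w p hp r hr, if_pos hx]
  · have key : ∀ y : ZMod (p ^ r),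
        (if p ∣ (x - y).val then (1:ℂ) else 0) * (if p ∣ y.val then (1:ℂ) else 0) = 0 := by
      intro y
      by_cases hy : p ∣ y.val
      · have hxy : ¬ p ∣ (x - y).val := by
          intro hc
          apply hx
          rw [hdvd] at hc hy ⊢
          have := congrArg₂ (· + ·) hc hy
          simpa [map_sub] using this
        simp [hxy]
      · simp [hy]
    simp_rw [key]
    rw [if_neg hx, Finset.sum_const, smul_zero]

theorem cv_uu :
    cv (fun b : ZMod (p ^ r) => if p ∣ b.val then (0:ℂ) else 1)
       (fun b : ZMod (p ^ r) => if p ∣ b.val then (0:ℂ) else 1)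
    = fun x => ((p:ℂ) ^ r - 2 * (p:ℂ) ^ (r - 1)) * (if p ∣ x.val then 0 else 1)
        + ((p:ℂ) ^ r - (p:ℂ) ^ (r - 1)) * (if p ∣ x.val then 1 else 0) := by
  classical
  funext x
  have hu : ∀ b : ZMod (p ^ r),
      (if p ∣ b.val then (0:ℂ) else 1) = 1 - (if p ∣ b.val then (1:ℂ) else 0) := by
    intro b; split <;> ring
  simp only [cv, hu]
  have expand : ∀ y : ZMod (p ^ r),
      (1 - (if p ∣ (x - y).val then (1:ℂ) else 0)) * (1 - (if p ∣ y.val then (1:ℂ) else 0))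
      = 1 - (if p ∣ (x - y).val then (1:ℂ) else 0) - (if p ∣ y.val then (1:ℂ) else 0)
        + (if p ∣ (x - y).val then (1:ℂ) else 0) * (if p ∣ y.val then (1:ℂ) else 0) := by
    intro y; ring
  simp_rw [expand]
  rw [Finset.sum_add_distrib, Finset.sum_sub_distrib, Finset.sum_sub_distrib,
    Finset.sum_const, sum_w p hp r hr, sum_w' p hp r hr x, sum_ww p hp r hr x]
  rw [Finset.card_univ, ZMod.card]
  by_cases hx : p ∣ x.val <;> simp [hx] <;> push_cast <;> ring

theorem cv_uw :
    cv (fun b : ZMod (p ^ r) => if p ∣ b.val then (0:ℂ) else 1)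
       (fun b : ZMod (p ^ r) => if p ∣ b.val then (1:ℂ) else 0)
    = fun x => (p:ℂ) ^ (r - 1) * (if p ∣ x.val then 0 else 1) := by
  classical
  funext x
  have hu : ∀ b : ZMod (p ^ r),
      (if p ∣ b.val then (0:ℂ) else 1) = 1 - (if p ∣ b.val then (1:ℂ) else 0) := by
    intro b; split <;> ring
  simp only [cv, hu]
  have expand : ∀ y : ZMod (p ^ r),
      (1 - (if p ∣ (x - y).val then (1:ℂ) else 0)) * (if p ∣ y.val then (1:ℂ) else 0)
      = (if p ∣ y.val then (1:ℂ) else 0)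
        - (if p ∣ (x - y).val then (1:ℂ) else 0) * (if p ∣ y.val then (1:ℂ) else 0) := by
    intro y; ring
  simp_rw [expand]
  rw [Finset.sum_sub_distrib, sum_w p hp r hr, sum_ww p hp r hr x]
  by_cases hx : p ∣ x.val <;> simp [hx]

end ZModConv

/-! ### Small convolutions -/

theorem cv_delta :
    cv (fun a : ZMod 2 => if a = 0 then (1:ℂ) else 0) (fun a => if a = 0 then (1:ℂ) else 0)
      = fun a => if a = 0 then (1:ℂ) else 0 := by
  funext a
  rw [cv, Finset.sum_eq_single (0 : ZMod 2)]
  · simp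
  · intro b _ hb; simp [hb]
  · simp

theorem cv_oneH (H : Type*) [AddCommGroup H] [Fintype H] :
    cv (fun _ : H => (1:ℂ)) (fun _ : H => (1:ℂ)) = fun _ => (Fintype.card H : ℂ) := by
  funext x
  simp [cv, Finset.card_univ]

theorem cv_point {G : Type*} [AddCommGroup G] [Fintype G] [DecidableEq G]
    (g0 : G) (h2 : g0 + g0 = 0) :
    cv (fun x : G => if x = g0 then (1:ℂ) else 0) (fun x => if x = g0 then (1:ℂ) else 0)
      = fun x => if x = 0 then (1:ℂ) else 0 := by
  funext x
  rw [cv, Finset.sum_eq_single g0]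
  · have : x - g0 = g0 ↔ x = 0 := by rw [sub_eq_iff_eq_add, h2]
    simp [this]
  · intro b _ hb; simp [hb]
  · simp

theorem cay_point {G : Type*} [AddCommGroup G] [Fintype G] [DecidableEq G] :
    cay (fun x : G => if x = 0 then (1:ℂ) else 0) = 1 := by
  ext g h
  simp [cay, Matrix.one_apply, sub_eq_zero]

/-! ### Composite convolutions on `ZMod 2 × ZMod (p ^ r) × H` -/

section Composite
variable (p : ℕ) (hp : p.Prime) (r : ℕ) (hr : 1 ≤ r) [NeZero (p ^ r)]
variable (H : Type*) [AddCommGroup H] [Fintype H] [DecidableEq H]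
include hp hr

theorem cv_ff :
    cv (fun x : ZMod 2 × ZMod (p ^ r) × H => if x.1 = 0 ∧ ¬ p ∣ x.2.1.val then (1:ℂ) else 0)
       (fun x => if x.1 = 0 ∧ ¬ p ∣ x.2.1.val then (1:ℂ) else 0)
    = fun x => (Fintype.card H : ℂ) *
        (((p:ℂ) ^ r - 2 * (p:ℂ) ^ (r - 1)) * (if x.1 = 0 ∧ ¬ p ∣ x.2.1.val then (1:ℂ) else 0)
          + ((p:ℂ) ^ r - (p:ℂ) ^ (r - 1)) * (if x.1 = 0 ∧ p ∣ x.2.1.val then (1:ℂ) else 0)) := by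
  classical
  have hsplit : (fun x : ZMod 2 × ZMod (p ^ r) × H =>
        if x.1 = 0 ∧ ¬ p ∣ x.2.1.val then (1:ℂ) else 0)
      = fun x => (fun a : ZMod 2 => if a = 0 then (1:ℂ) else 0) x.1 *
          ((fun y : ZMod (p ^ r) × H =>
            (fun b : ZMod (p ^ r) => if p ∣ b.val then (0:ℂ) else 1) y.1 *
            (fun _ : H => (1:ℂ)) y.2) x.2) := by
    funext x; by_cases h1 : x.1 = 0 <;> by_cases h2 : p ∣ x.2.1.val <;> simp [h1, h2]
  rw [hsplit,
    cv_prod (fun a : ZMod 2 => if a = 0 then (1:ℂ) else 0)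
      (fun a : ZMod 2 => if a = 0 then (1:ℂ) else 0)
      (fun y : ZMod (p ^ r) × H =>
        (fun b : ZMod (p ^ r) => if p ∣ b.val then (0:ℂ) else 1) y.1 *
        (fun _ : H => (1:ℂ)) y.2)
      (fun y : ZMod (p ^ r) × H =>
        (fun b : ZMod (p ^ r) => if p ∣ b.val then (0:ℂ) else 1) y.1 *
        (fun _ : H => (1:ℂ)) y.2),
    cv_prod (fun b : ZMod (p ^ r) => if p ∣ b.val then (0:ℂ) else 1)
      (fun b : ZMod (p ^ r) => if p ∣ b.val then (0:ℂ) else 1)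
      (fun _ : H => (1:ℂ)) (fun _ : H => (1:ℂ)),
    cv_delta, cv_oneH, cv_uu p hp r hr]
  funext x
  by_cases h1 : x.1 = 0 <;> by_cases h2 : p ∣ x.2.1.val <;> simp [h1, h2] <;> ring

theorem cv_fk :
    cv (fun x : ZMod 2 × ZMod (p ^ r) × H => if x.1 = 0 ∧ ¬ p ∣ x.2.1.val then (1:ℂ) else 0)
       (fun x => if x.1 = 0 ∧ p ∣ x.2.1.val then (1:ℂ) else 0)
    = fun x => (Fintype.card H : ℂ) *
        ((p:ℂ) ^ (r - 1) * (if x.1 = 0 ∧ ¬ p ∣ x.2.1.val then (1:ℂ) else 0)) := by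
  classical
  have hsplit1 : (fun x : ZMod 2 × ZMod (p ^ r) × H =>
        if x.1 = 0 ∧ ¬ p ∣ x.2.1.val then (1:ℂ) else 0)
      = fun x => (fun a : ZMod 2 => if a = 0 then (1:ℂ) else 0) x.1 *
          ((fun y : ZMod (p ^ r) × H =>
            (fun b : ZMod (p ^ r) => if p ∣ b.val then (0:ℂ) else 1) y.1 *
            (fun _ : H => (1:ℂ)) y.2) x.2) := by
    funext x; by_cases h1 : x.1 = 0 <;> by_cases h2 : p ∣ x.2.1.val <;> simp [h1, h2]
  have hsplit2 : (fun x : ZMod 2 × ZMod (p ^ r) × H =>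
        if x.1 = 0 ∧ p ∣ x.2.1.val then (1:ℂ) else 0)
      = fun x => (fun a : ZMod 2 => if a = 0 then (1:ℂ) else 0) x.1 *
          ((fun y : ZMod (p ^ r) × H =>
            (fun b : ZMod (p ^ r) => if p ∣ b.val then (1:ℂ) else 0) y.1 *
            (fun _ : H => (1:ℂ)) y.2) x.2) := by
    funext x; by_cases h1 : x.1 = 0 <;> by_cases h2 : p ∣ x.2.1.val <;> simp [h1, h2]
  rw [hsplit1, hsplit2,
    cv_prod (fun a : ZMod 2 => if a = 0 then (1:ℂ) else 0)
      (fun a : ZMod 2 => if a = 0 then (1:ℂ) else 0)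
      (fun y : ZMod (p ^ r) × H =>
        (fun b : ZMod (p ^ r) => if p ∣ b.val then (0:ℂ) else 1) y.1 *
        (fun _ : H => (1:ℂ)) y.2)
      (fun y : ZMod (p ^ r) × H =>
        (fun b : ZMod (p ^ r) => if p ∣ b.val then (1:ℂ) else 0) y.1 *
        (fun _ : H => (1:ℂ)) y.2),
    cv_prod (fun b : ZMod (p ^ r) => if p ∣ b.val then (0:ℂ) else 1)
      (fun b : ZMod (p ^ r) => if p ∣ b.val then (1:ℂ) else 0)
      (fun _ : H => (1:ℂ)) (fun _ : H => (1:ℂ)),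
    cv_delta, cv_oneH, cv_uw p hp r hr]
  funext x
  by_cases h1 : x.1 = 0 <;> by_cases h2 : p ∣ x.2.1.val <;> simp [h1, h2] <;> ring

end Composite

end Aux

/-- Proposition 2.6: the Cayley graph on `ℤ₂ × ℤ_{p^r} × H` with
`S = {(0,ℓ,h) : gcd(ℓ,p)=1, h ∈ H} ∪ {(1,0,0)}` has
`(cos(2π/(p^{r-1}m)), i sin(2π/(p^{r-1}m)))`-fractional revival between `(x,y,z)` and
`(x+1,y,z)` for every vertex, at time `t = 2π/(p^{r-1}m)`, provided
`p^{r-1} m ∉ {1,2,4}`. -/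
theorem fractional_revival_Z2_Zpr_H
    (p : ℕ) (hp : p.Prime) (r : ℕ) (hr : 1 ≤ r) [NeZero (p ^ r)]
    (H : Type) [AddCommGroup H] [Fintype H] [DecidableEq H]
    (m : ℕ) (hm : Fintype.card H = m)
    (hnot : p ^ (r - 1) * m ∉ ({1, 2, 4} : Set ℕ))
    (S : Finset (ZMod 2 × ZMod (p ^ r) × H))
    (hS : S = (({0} : Finset (ZMod 2)) ×ˢ
        ((Finset.univ.filter (fun v : ZMod (p ^ r) => ¬ p ∣ v.val)) ×ˢ
          (Finset.univ : Finset H))) ∪ {((1 : ZMod 2), (0 : ZMod (p ^ r)), (0 : H))})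
    (A : Matrix (ZMod 2 × ZMod (p ^ r) × H) (ZMod 2 × ZMod (p ^ r) × H) ℂ)
    (hA : ∀ g h, A g h = if g - h ∈ S then 1 else 0)
    (t : ℝ) (ht : t = 2 * π / ((p : ℝ) ^ (r - 1) * m))
    (Ht : Matrix (ZMod 2 × ZMod (p ^ r) × H) (ZMod 2 × ZMod (p ^ r) × H) ℂ)
    (hHt : Ht = NormedSpace.exp ((Complex.I * (t : ℂ)) • A))
    (α β : ℂ)
    (hα : α = Real.cos (2 * π / ((p : ℝ) ^ (r - 1) * m)))
    (hβ : β = Complex.I * Real.sin (2 * π / ((p : ℝ) ^ (r - 1) * m))) :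
    ∀ v : ZMod 2 × ZMod (p ^ r) × H,
      Ht *ᵥ (Pi.single v 1 : ZMod 2 × ZMod (p ^ r) × H → ℂ) =
        α • (Pi.single v 1 : ZMod 2 × ZMod (p ^ r) × H → ℂ) +
        β • (Pi.single (v + ((1 : ZMod 2), (0 : ZMod (p ^ r)), (0 : H))) 1 :
          ZMod 2 × ZMod (p ^ r) × H → ℂ) := by
  classical
  intro v
  haveI : NeZero p := ⟨hp.pos.ne'⟩
  have hm1 : 0 < m := by rw [← hm]; exact Fintype.card_pos
  have hpC : (p:ℂ) ≠ 0 := by exact_mod_cast hp.pos.ne'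
  have hmC : (m:ℂ) ≠ 0 := by exact_mod_cast hm1.ne'
  set z : ℂ := Complex.I * (t:ℂ) with hz
  set w0 : ℂ := 2 * (π:ℂ) * Complex.I with hw0
  have hw0ne : w0 ≠ 0 := by
    rw [hw0]
    simp [Real.pi_ne_zero, Complex.I_ne_zero, Complex.ofReal_ne_zero]
  have hkey : z * ((m:ℂ) * (p:ℂ) ^ (r - 1)) = w0 := by
    rw [hz, hw0, ht]
    have hcast : ((2 * π / ((p:ℝ) ^ (r - 1) * m) : ℝ) : ℂ)
        = 2 * (π:ℂ) / ((p:ℂ) ^ (r - 1) * (m:ℂ)) := by push_cast; ring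
    rw [hcast]
    have h1 : (p:ℂ) ^ (r - 1) ≠ 0 := pow_ne_zero _ hpC
    field_simp
  set g0 : ZMod 2 × ZMod (p ^ r) × H := ((1 : ZMod 2), (0 : ZMod (p ^ r)), (0 : H)) with hg0
  set fB : ZMod 2 × ZMod (p ^ r) × H → ℂ :=
    fun x => if x.1 = 0 ∧ ¬ p ∣ x.2.1.val then (1:ℂ) else 0 with hfB
  set fK : ZMod 2 × ZMod (p ^ r) × H → ℂ :=
    fun x => if x.1 = 0 ∧ p ∣ x.2.1.val then (1:ℂ) else 0 with hfK
  set fP : ZMod 2 × ZMod (p ^ r) × H → ℂ :=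
    fun x => if x = g0 then (1:ℂ) else 0 with hfP
  -- A = B + P
  have hAeq : A = cay fB + cay fP := by
    ext g h
    rw [hA]
    have hmem : g - h ∈ S ↔ (((g - h).1 = 0 ∧ ¬ p ∣ (g - h).2.1.val) ∨ g - h = g0) := by
      rw [hS, hg0]
      simp only [Finset.mem_union, Finset.mem_product, Finset.mem_singleton,
        Finset.mem_filter, Finset.mem_univ, true_and, and_true]
    rw [if_congr hmem rfl rfl]
    simp only [Matrix.add_apply, cay, Matrix.of_apply, hfB, hfP]
    by_cases hx0 : g - h = g0
    · have hx1 : ¬ ((g - h).1 = 0 ∧ ¬ p ∣ (g - h).2.1.val) := by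
        intro hc
        have h1 : (1 : ZMod 2) = 0 := by
          have := hc.1
          rw [hx0, hg0] at this
          exact this
        exact absurd h1 (by decide)
      rw [if_pos (Or.inr hx0), if_neg hx1, if_pos hx0]
      norm_num
    · by_cases hx1 : (g - h).1 = 0 ∧ ¬ p ∣ (g - h).2.1.val
      · rw [if_pos (Or.inl hx1), if_pos hx1, if_neg hx0]
        norm_num
      · rw [if_neg (by tauto), if_neg hx1, if_neg hx0]
        norm_num
  set c1 : ℂ := (m:ℂ) * ((p:ℂ) ^ r - 2 * (p:ℂ) ^ (r - 1)) with hc1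
  set c2 : ℂ := (m:ℂ) * ((p:ℂ) ^ r - (p:ℂ) ^ (r - 1)) with hc2
  set d : ℂ := (m:ℂ) * (p:ℂ) ^ (r - 1) with hd
  have hBB : cay fB * cay fB = c1 • cay fB + c2 • cay fK := by
    rw [cay_mul, hfB, hfK, cv_ff p hp r hr H, hm]
    ext g h
    simp only [cay, Matrix.of_apply, Matrix.add_apply, Matrix.smul_apply, smul_eq_mul, hc1, hc2]
    ring
  have hBK : cay fB * cay fK = d • cay fB := by
    rw [cay_mul, hfB, hfK, cv_fk p hp r hr H, hm]
    ext g h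
    simp only [cay, Matrix.of_apply, Matrix.smul_apply, smul_eq_mul, hd]
    ring
  have hKB : cay fK * cay fB = cay fB * cay fK := by
    rw [cay_mul, cay_mul, cv_comm]
  have hPP : cay fP * cay fP = 1 := by
    have hgg : g0 + g0 = 0 := by
      rw [hg0]
      have h11 : (1 : ZMod 2) + 1 = 0 := by decide
      rw [Prod.mk_add_mk, Prod.mk_add_mk, h11, add_zero, add_zero]
      rfl
    rw [cay_mul, hfP, cv_point g0 hgg, cay_point]
  have hcube : cay fB * (cay fB * cay fB) = c1 • (cay fB * cay fB) + (c2 * d) • cay fB := by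
    calc cay fB * (cay fB * cay fB) = cay fB * cay fB * cay fB := by rw [mul_assoc]
      _ = (c1 • cay fB + c2 • cay fK) * cay fB := by rw [hBB]
      _ = c1 • (cay fB * cay fB) + c2 • (cay fK * cay fB) := by
          rw [add_mul, smul_mul_assoc, smul_mul_assoc]
      _ = c1 • (cay fB * cay fB) + (c2 * d) • cay fB := by
          rw [hKB, hBK, smul_smul]
  set M : Matrix (ZMod 2 × ZMod (p ^ r) × H) (ZMod 2 × ZMod (p ^ r) × H) ℂ := z • cay fB
    with hM
  set MP : Matrix (ZMod 2 × ZMod (p ^ r) × H) (ZMod 2 × ZMod (p ^ r) × H) ℂ := z • cay fP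
    with hMP
  set μ2 : ℂ := -w0 with hμ2
  set μ3 : ℂ := ((p:ℂ) - 1) * w0 with hμ3
  have hpr : (p:ℂ) ^ r = (p:ℂ) ^ (r - 1) * p := by
    conv_lhs => rw [show r = (r - 1) + 1 by omega]
    rw [pow_succ]
  have hσ : z * c1 = μ2 + μ3 := by
    rw [hc1, hμ2, hμ3, hpr]
    linear_combination ((p:ℂ) - 2) * hkey
  have hτ : (z * z) * (c2 * d) = -(μ2 * μ3) := by
    rw [hc2, hd, hμ2, hμ3, hpr]
    linear_combination ((p:ℂ) - 1) * (z * ((m:ℂ) * (p:ℂ) ^ (r - 1)) + w0) * hkey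
  have hMM : M * M = (z * z) • (cay fB * cay fB) := by
    rw [hM, smul_mul_assoc, mul_smul_comm, smul_smul]
  have hcubic : M * (M * M) = (μ2 + μ3) • (M * M) - (μ2 * μ3) • M := by
    rw [hMM, hM, mul_smul_comm, smul_mul_assoc, smul_smul, hcube, smul_add, smul_smul, smul_smul,
      smul_smul, smul_smul]
    rw [sub_eq_add_neg, ← neg_smul]
    congr 1
    · congr 1
      linear_combination (z * z) * hσ
    · congr 1
      linear_combination z * hτ
  have hμ2ne : μ2 ≠ 0 := by rw [hμ2]; exact neg_ne_zero.mpr hw0ne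
  have hp1C : (p:ℂ) - 1 ≠ 0 := by
    have : (p:ℂ) ≠ 1 := by exact_mod_cast hp.one_lt.ne'
    exact sub_ne_zero.mpr this
  have hμ3ne : μ3 ≠ 0 := by rw [hμ3]; exact mul_ne_zero hp1C hw0ne
  have hμ23 : μ2 - μ3 ≠ 0 := by
    rw [hμ2, hμ3]
    intro hc
    have h2 : (p:ℂ) * w0 = 0 := by linear_combination -hc
    rcases mul_eq_zero.mp h2 with h' | h'
    · exact hpC h'
    · exact hw0ne h'
  have hμ32 : μ3 - μ2 ≠ 0 := fun hc => hμ23 (by linear_combination -hc)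
  set E1 := (μ2 * μ3)⁻¹ • (M * M - (μ2 + μ3) • M + (μ2 * μ3) •
    (1 : Matrix (ZMod 2 × ZMod (p ^ r) × H) (ZMod 2 × ZMod (p ^ r) × H) ℂ)) with hE1
  set E2 := (μ2 * (μ2 - μ3))⁻¹ • (M * M - μ3 • M) with hE2
  set E3 := (μ3 * (μ3 - μ2))⁻¹ • (M * M - μ2 • M) with hE3
  have hsumE : E1 + E2 + E3 = 1 := by
    rw [hE1, hE2, hE3]
    match_scalars
    · field_simp
      ring
    · field_simp
      ring
    · field_simp
  have hME1 : M * E1 = (0:ℂ) • E1 := by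
    have inner : M * (M * M - (μ2 + μ3) • M + (μ2 * μ3) •
        (1 : Matrix (ZMod 2 × ZMod (p ^ r) × H) (ZMod 2 × ZMod (p ^ r) × H) ℂ)) = 0 := by
      rw [mul_add, mul_sub, mul_smul_comm (μ2 + μ3) M M, mul_smul_comm (μ2 * μ3) M 1,
        mul_one, hcubic]
      abel
    rw [hE1, mul_smul_comm, inner, smul_zero, zero_smul]
  have hME2 : M * E2 = μ2 • E2 := by
    have inner : M * (M * M - μ3 • M) = μ2 • (M * M - μ3 • M) := by
      rw [mul_sub, mul_smul_comm μ3 M M, hcubic]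
      module
    rw [hE2, mul_smul_comm, inner, smul_comm]
  have hME3 : M * E3 = μ3 • E3 := by
    have inner : M * (M * M - μ2 • M) = μ3 • (M * M - μ2 • M) := by
      rw [mul_sub, mul_smul_comm μ2 M M, hcubic]
      module
    rw [hE3, mul_smul_comm, inner, smul_comm]
  have hexpμ2 : Complex.exp μ2 = 1 := by
    rw [hμ2, hw0, show -(2 * (π:ℂ) * Complex.I) = ((-1 : ℤ) : ℂ) * (2 * (π:ℂ) * Complex.I) by
      push_cast; ring]
    exact Complex.exp_int_mul_two_pi_mul_I (-1)
  have hexpμ3 : Complex.exp μ3 = 1 := by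
    rw [hμ3, hw0, show ((p:ℂ) - 1) * (2 * (π:ℂ) * Complex.I)
        = (((p:ℤ) - 1 : ℤ) : ℂ) * (2 * (π:ℂ) * Complex.I) by push_cast; ring]
    exact Complex.exp_int_mul_two_pi_mul_I _
  have hexpM : NormedSpace.exp M = 1 := by
    have h1 := matrix_exp_mul_eigen M E1 0 (by rw [hME1])
    have h2 := matrix_exp_mul_eigen M E2 μ2 hME2
    have h3 := matrix_exp_mul_eigen M E3 μ3 hME3
    calc NormedSpace.exp M = NormedSpace.exp M * (E1 + E2 + E3) := by rw [hsumE, mul_one]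
      _ = NormedSpace.exp M * E1 + NormedSpace.exp M * E2 + NormedSpace.exp M * E3 := by
          rw [mul_add, mul_add]
      _ = Complex.exp 0 • E1 + Complex.exp μ2 • E2 + Complex.exp μ3 • E3 := by
          rw [h1, h2, h3]
      _ = E1 + E2 + E3 := by
          rw [Complex.exp_zero, hexpμ2, hexpμ3, one_smul, one_smul, one_smul]
      _ = 1 := hsumE
  set F1 := (2⁻¹ : ℂ) • ((1 : Matrix (ZMod 2 × ZMod (p ^ r) × H)
    (ZMod 2 × ZMod (p ^ r) × H) ℂ) + cay fP) with hF1
  set F2 := (2⁻¹ : ℂ) • ((1 : Matrix (ZMod 2 × ZMod (p ^ r) × H)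
    (ZMod 2 × ZMod (p ^ r) × H) ℂ) - cay fP) with hF2
  have hsumF : F1 + F2 = 1 := by
    rw [hF1, hF2]
    match_scalars <;> norm_num
  have hMPF1 : MP * F1 = z • F1 := by
    have inner : cay fP * ((1 : Matrix (ZMod 2 × ZMod (p ^ r) × H)
        (ZMod 2 × ZMod (p ^ r) × H) ℂ) + cay fP) = 1 + cay fP := by
      rw [mul_add, mul_one, hPP, add_comm]
    rw [hMP, hF1, smul_mul_assoc, mul_smul_comm, inner]
  have hMPF2 : MP * F2 = (-z) • F2 := by
    have inner : cay fP * ((1 : Matrix (ZMod 2 × ZMod (p ^ r) × H)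
        (ZMod 2 × ZMod (p ^ r) × H) ℂ) - cay fP) = -(1 - cay fP) := by
      rw [mul_sub, mul_one, hPP, neg_sub]
    rw [hMP, hF2, smul_mul_assoc, mul_smul_comm, inner]
    module
  have hez : Complex.exp z = (Real.cos t : ℂ) + (Real.sin t : ℂ) * Complex.I := by
    rw [hz, mul_comm, Complex.exp_mul_I, ← Complex.ofReal_cos, ← Complex.ofReal_sin]
  have hez' : Complex.exp (-z) = (Real.cos t : ℂ) - (Real.sin t : ℂ) * Complex.I := by
    rw [hz, show -(Complex.I * (t:ℂ)) = ((-t : ℝ) : ℂ) * Complex.I by push_cast; ring,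
      Complex.exp_mul_I, Complex.ofReal_neg, Complex.cos_neg, Complex.sin_neg,
      ← Complex.ofReal_cos, ← Complex.ofReal_sin]
    ring
  have hexpMP : NormedSpace.exp MP = (Real.cos t : ℂ) • (1 : Matrix (ZMod 2 × ZMod (p ^ r) × H)
      (ZMod 2 × ZMod (p ^ r) × H) ℂ) + ((Real.sin t : ℂ) * Complex.I) • cay fP := by
    have h1 := matrix_exp_mul_eigen MP F1 z hMPF1
    have h2 := matrix_exp_mul_eigen MP F2 (-z) hMPF2
    calc NormedSpace.exp MP = NormedSpace.exp MP * (F1 + F2) := by rw [hsumF, mul_one]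
      _ = Complex.exp z • F1 + Complex.exp (-z) • F2 := by rw [mul_add, h1, h2]
      _ = _ := by
          rw [hez, hez', hF1, hF2]
          match_scalars <;> ring
  have hcomm : Commute M MP := by
    show M * MP = MP * M
    rw [hM, hMP, smul_mul_assoc, smul_mul_assoc, mul_smul_comm, mul_smul_comm,
      cay_mul, cay_mul, cv_comm]
  have hHtsplit : Ht = NormedSpace.exp M * NormedSpace.exp MP := by
    rw [hHt, hAeq, smul_add, ← hM, ← hMP]
    exact Matrix.exp_add_of_commute M MP hcomm
  have hPvec : cay fP *ᵥ (Pi.single v 1 : ZMod 2 × ZMod (p ^ r) × H → ℂ)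
      = Pi.single (v + g0) 1 := by
    funext g
    simp only [Matrix.mulVec, dotProduct, cay, Matrix.of_apply, hfP]
    rw [Finset.sum_eq_single v]
    · rw [Pi.single_eq_same, mul_one]
      have hiff : g - v = g0 ↔ g = v + g0 := sub_eq_iff_eq_add'
      rw [Pi.single_apply, if_congr hiff rfl rfl]
    · intro b _ hb
      rw [Pi.single_eq_of_ne hb, mul_zero]
    · intro hv
      exact absurd (Finset.mem_univ v) hv
  rw [hHtsplit, hexpM, one_mul, hexpMP, Matrix.add_mulVec, Matrix.smul_mulVec,
    Matrix.smul_mulVec, Matrix.one_mulVec, hPvec]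
  rw [hα, hβ, ht]
  rw [mul_comm ((Real.sin (2 * π / ((p:ℝ) ^ (r - 1) * m)) : ℂ)) Complex.I]
end

section
/- Let H be a finite abelian group of order n with exponent e, S₁ ⊆ H with 0 ∉ S₁ and ℓS₁ = S₁ for all ℓ coprime to e, and let d = |S₁|. Let G = ℤ₂ × H and S = ({1}×S₁) ∪ ({0}×S₁) ∪ {(1,0)}. Suppose a prime p divides d and the indicator function f of S₁ is p^r-plateaued (f̂(χ_y) ≡ f̂(χ_0) mod p^r for all y) with r ≥ 1. Set r₀ = min(r, v_p(d)). Then Cay(G,S) has fractional revival between (x,y) and (x+1,y) for every (x,y) ∈ G at time t = π/p^{r₀}, with α+β = e^{iπ/p^{r₀}} and α-β = e^{-iπ/p^{r₀}}. -/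
open Matrix Real

private lemma exp_mulVec_eigen {n : Type} [Fintype n] [DecidableEq n]
    (M : Matrix n n ℂ) (v : n → ℂ) (μ : ℂ) (h : M *ᵥ v = μ • v) :
    NormedSpace.exp M *ᵥ v = Complex.exp μ • v := by
  letI : SeminormedRing (Matrix n n ℂ) := Matrix.linftyOpSemiNormedRing
  letI : NormedRing (Matrix n n ℂ) := Matrix.linftyOpNormedRing
  letI : NormedAlgebra ℂ (Matrix n n ℂ) := Matrix.linftyOpNormedAlgebra
  have hpow : ∀ k : ℕ, M ^ k *ᵥ v = μ ^ k • v := by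
    intro k
    induction k with
    | zero => simp
    | succ k ih =>
      rw [pow_succ, pow_succ, ← Matrix.mulVec_mulVec, h, Matrix.mulVec_smul, ih,
        smul_smul, mul_comm]
  let Φ : Matrix n n ℂ →ₗ[ℂ] (n → ℂ) :=
    { toFun := fun N => N *ᵥ v
      map_add' := fun N₁ N₂ => Matrix.add_mulVec N₁ N₂ v
      map_smul' := fun c N => by simp [Matrix.smul_mulVec] }
  have hΦc : Continuous Φ := Φ.continuous_of_finiteDimensional
  have hsum : Summable fun k : ℕ => ((k.factorial : ℂ))⁻¹ • M ^ k :=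
    NormedSpace.expSeries_summable' M
  have hsum' : Summable fun k : ℕ => ((k.factorial : ℂ))⁻¹ * μ ^ k := by
    simpa [smul_eq_mul] using NormedSpace.expSeries_summable' (𝕂 := ℂ) μ
  calc NormedSpace.exp M *ᵥ v = Φ (∑' k : ℕ, ((k.factorial : ℂ))⁻¹ • M ^ k) := by
        rw [NormedSpace.exp_eq_tsum (𝕂 := ℂ)]; rfl
    _ = ∑' k : ℕ, Φ (((k.factorial : ℂ))⁻¹ • M ^ k) :=
        ((hsum.hasSum.map Φ.toAddMonoidHom hΦc).tsum_eq).symm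
    _ = ∑' k : ℕ, (((k.factorial : ℂ))⁻¹ * μ ^ k) • v := by
        refine tsum_congr fun k => ?_
        simp only [Φ, LinearMap.coe_mk, AddHom.coe_mk, Matrix.smul_mulVec, hpow k,
          smul_smul]
    _ = (∑' k : ℕ, ((k.factorial : ℂ))⁻¹ * μ ^ k) • v := hsum'.tsum_smul_const v
    _ = Complex.exp μ • v := by
        congr 1
        rw [Complex.exp_eq_exp_ℂ, NormedSpace.exp_eq_tsum (𝕂 := ℂ)]
        simp [smul_eq_mul]

/-- Theorem 3.6: if the indicator function of `S₁ ⊆ H` is a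
`p^r`-plateaued class function, `p ∣ d = |S₁|`, and
`S = ({1}×S₁) ∪ ({0}×S₁) ∪ {(1,0)} ⊆ ℤ₂ × H`, then `Cay(ℤ₂ × H, S)` has fractional
revival between `(x,y)` and `(x+1,y)` for every `(x,y)`, at time `t = π/p^{r₀}` with
`r₀ = min(r, v_p(d))`, where `α + β = e^{iπ/p^{r₀}}` and `α - β = e^{-iπ/p^{r₀}}`. -/
theorem fractional_revival_from_plateaued
    (H : Type) [AddCommGroup H] [Fintype H] [DecidableEq H]
    (S₁ : Finset H) (h0 : (0 : H) ∉ S₁)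
    (hstable : ∀ ℓ : ℕ, Nat.Coprime ℓ (AddMonoid.exponent H) →
      S₁.image (fun s => ℓ • s) = S₁)
    (d : ℕ) (hd : d = S₁.card)
    (p : ℕ) (hp : p.Prime) (hpd : p ∣ d)
    (ψ : H ≃ AddChar H ℂ) (hψ0 : ∀ w : H, ψ 0 w = 1)
    (r : ℕ) (hr : 1 ≤ r)
    (hplat : ∀ y : H, ∃ m : ℤ,
      (∑ z ∈ S₁, ψ y z) - (d : ℂ) = (m : ℂ) * (p : ℂ) ^ r)
    (r₀ : ℕ) (hr₀ : r₀ = min r (padicValNat p d))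
    (S : Finset (ZMod 2 × H))
    (hS : S = (({(1 : ZMod 2)} : Finset (ZMod 2)) ×ˢ S₁) ∪
        (({(0 : ZMod 2)} : Finset (ZMod 2)) ×ˢ S₁) ∪ {((1 : ZMod 2), (0 : H))})
    (A : Matrix (ZMod 2 × H) (ZMod 2 × H) ℂ)
    (hA : ∀ g h, A g h = if g - h ∈ S then 1 else 0)
    (t : ℝ) (ht : t = π / (p : ℝ) ^ r₀)
    (Ht : Matrix (ZMod 2 × H) (ZMod 2 × H) ℂ)
    (hHt : Ht = NormedSpace.exp ((Complex.I * (t : ℂ)) • A)) :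
    ∃ α β : ℂ,
      α + β = Complex.exp (Complex.I * (π : ℂ) / (p : ℂ) ^ r₀) ∧
      α - β = Complex.exp (-(Complex.I * (π : ℂ)) / (p : ℂ) ^ r₀) ∧
      ∀ v : ZMod 2 × H,
        Ht *ᵥ (Pi.single v 1 : ZMod 2 × H → ℂ) =
          α • (Pi.single v 1 : ZMod 2 × H → ℂ) +
          β • (Pi.single (v + ((1 : ZMod 2), (0 : H))) 1 : ZMod 2 × H → ℂ) := by
  classical
  set c : ℂ := (p : ℂ) ^ r₀ with hc
  have hpne : (p : ℂ) ≠ 0 := by exact_mod_cast hp.ne_zero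
  have hcne : c ≠ 0 := pow_ne_zero _ hpne
  set E : ℂ := Complex.exp (Complex.I * (π : ℂ) / c) with hE
  set E' : ℂ := Complex.exp (-(Complex.I * (π : ℂ)) / c) with hE'
  refine ⟨(E + E') / 2, (E - E') / 2, by ring, by ring, ?_⟩
  set α : ℂ := (E + E') / 2 with hα
  set β : ℂ := (E - E') / 2 with hβ
  have htC : Complex.I * (t : ℂ) = Complex.I * (π : ℂ) / c := by
    rw [ht, hc]; push_cast; ring
  set T : Matrix (ZMod 2 × H) (ZMod 2 × H) ℂ :=
    fun g h => if g - h = ((1 : ZMod 2), (0 : H)) then 1 else 0 with hT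
  have hcond : ∀ g h z : ZMod 2 × H, g - h = z ↔ h = g - z := fun g h z =>
    ⟨fun e => eq_sub_of_add_eq (sub_eq_iff_eq_add'.mp e).symm,
     fun e => by rw [e, sub_sub_cancel]⟩
  have hr₀r : r₀ ≤ r := hr₀ ▸ min_le_left _ _
  have hdvd : p ^ r₀ ∣ d :=
    dvd_trans (pow_dvd_pow p (hr₀ ▸ min_le_right _ _)) pow_padicValNat_dvd
  -- action on characters
  have key : ∀ χ : AddChar (ZMod 2 × H) ℂ,
      Ht *ᵥ ⇑χ = (α • (1 : Matrix (ZMod 2 × H) (ZMod 2 × H) ℂ) + β • T) *ᵥ ⇑χ := by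
    intro χ
    set s : ℂ := χ ((1 : ZMod 2), (0 : H)) with hs
    set F : ℂ := ∑ b ∈ S₁, χ ((0 : ZMod 2), -b) with hF
    have hneg : ∀ x : ZMod 2, -x = x := by decide
    have hzz : χ ((0 : ZMod 2), (0 : H)) = 1 := by
      have h00 : ((0 : ZMod 2), (0 : H)) = (0 : ZMod 2 × H) := rfl
      rw [h00, AddChar.map_zero_eq_one]
    have hsub : ∀ (g : ZMod 2 × H) (x : ZMod 2) (b : H),
        χ (g - (x, b)) = χ g * (χ (x, (0 : H)) * χ ((0 : ZMod 2), -b)) := by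
      intro g x b
      rw [sub_eq_add_neg, AddChar.map_add_eq_mul]
      congr 1
      have hne : -(x, b) = ((x, (0 : H)) + ((0 : ZMod 2), -b)) := by
        simp [Prod.ext_iff, hneg]
      rw [hne, AddChar.map_add_eq_mul]
    have hs2 : s * s = 1 := by
      rw [hs, ← AddChar.map_add_eq_mul]
      have h2 : ((1 : ZMod 2), (0 : H)) + ((1 : ZMod 2), (0 : H)) = 0 := by
        have h11 : (1 : ZMod 2) + 1 = 0 := by decide
        simp [Prod.ext_iff, h11]
      rw [h2, AddChar.map_zero_eq_one]
    have hdisj1 : Disjoint (({(1 : ZMod 2)} : Finset (ZMod 2)) ×ˢ S₁)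
        (({(0 : ZMod 2)} : Finset (ZMod 2)) ×ˢ S₁) := by
      rw [Finset.disjoint_left]
      rintro ⟨a, b⟩ h1 h2
      simp only [Finset.mem_product, Finset.mem_singleton] at h1 h2
      exact one_ne_zero (h1.1 ▸ h2.1)
    have hdisj2 : Disjoint ((({(1 : ZMod 2)} : Finset (ZMod 2)) ×ˢ S₁) ∪
        (({(0 : ZMod 2)} : Finset (ZMod 2)) ×ˢ S₁))
        ({((1 : ZMod 2), (0 : H))} : Finset (ZMod 2 × H)) := by
      rw [Finset.disjoint_right]
      intro z h1 h2
      rw [Finset.mem_singleton] at h1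
      subst h1
      simp only [Finset.mem_union, Finset.mem_product, Finset.mem_singleton] at h2
      rcases h2 with ⟨-, h2⟩ | ⟨h2, -⟩
      · exact h0 h2
      · exact one_ne_zero h2
    -- eigenvalue equation
    have hAχ : A *ᵥ ⇑χ = (s * F + F + s) • ⇑χ := by
      funext g
      have e1 : (A *ᵥ ⇑χ) g = ∑ h : ZMod 2 × H, (if g - h ∈ S then χ h else 0) := by
        simp [Matrix.mulVec, dotProduct, hA, ite_mul]
      have e2 : ∑ h : ZMod 2 × H, (if g - h ∈ S then χ h else 0)
          = ∑ z : ZMod 2 × H, (if z ∈ S then χ (g - z) else 0) := by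
        rw [← (Equiv.subLeft g).sum_comp (fun z => if z ∈ S then χ (g - z) else 0)]
        refine Finset.sum_congr rfl fun h _ => ?_
        simp [Equiv.subLeft_apply, sub_sub_cancel]
      rw [e1, e2, Finset.sum_ite_mem, Finset.univ_inter, hS,
        Finset.sum_union hdisj2, Finset.sum_union hdisj1, Finset.sum_singleton,
        Finset.sum_product, Finset.sum_product, Finset.sum_singleton, Finset.sum_singleton]
      rw [Finset.sum_congr rfl (fun b _ => hsub g 1 b),
        Finset.sum_congr rfl (fun b _ => hsub g 0 b), hsub g 1 0]
      simp only [hzz, one_mul, neg_zero, mul_one]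
      have hsum1 : ∑ b ∈ S₁, χ g * (χ ((1 : ZMod 2), (0 : H)) * χ ((0 : ZMod 2), -b))
          = χ g * s * F := by
        rw [hs, hF, Finset.mul_sum]
        exact Finset.sum_congr rfl fun b _ => by ring
      have hsum2 : ∑ b ∈ S₁, χ g * χ ((0 : ZMod 2), -b) = χ g * F := by
        rw [hF, Finset.mul_sum]
      rw [hsum1, hsum2, ← hs]
      simp only [Pi.smul_apply, smul_eq_mul]
      ring
    -- identify F via hplat
    have hχ' : ∃ y : H, ∀ b : H, ψ y b = χ ((0 : ZMod 2), -b) := by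
      refine ⟨ψ.symm
        { toFun := fun b => χ ((0 : ZMod 2), -b)
          map_zero_eq_one' := by simpa using hzz
          map_add_eq_mul' := fun a b => by
            have hab : ((0 : ZMod 2), -(a + b))
                = ((0 : ZMod 2), -a) + ((0 : ZMod 2), -b) := by
              simp [Prod.ext_iff]; abel
            simp only [hab, AddChar.map_add_eq_mul] }, fun b => ?_⟩
      rw [Equiv.apply_symm_apply]
      rfl
    obtain ⟨y, hy⟩ := hχ'
    obtain ⟨m, hm⟩ := hplat y
    have hFval : F = (m : ℂ) * (p : ℂ) ^ r + (d : ℂ) := by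
      rw [hF, ← Finset.sum_congr rfl fun z _ => hy z]
      exact sub_eq_iff_eq_add.mp hm
    -- value of the exponential
    have hscases : s = 1 ∨ s = -1 := mul_self_eq_one_iff.mp hs2
    have hexp : Complex.exp (Complex.I * (t : ℂ) * (s * F + F + s)) = α + β * s := by
      rcases hscases with h1 | h1
      · -- s = 1
        rw [h1, mul_one, one_mul]
        obtain ⟨d', hd'⟩ := hdvd
        set k : ℤ := (d' : ℤ) + m * (p : ℤ) ^ (r - r₀) with hk
        have e2 : (p : ℂ) ^ (r - r₀) * c = (p : ℂ) ^ r := by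
          rw [hc, pow_sub_mul_pow _ hr₀r]
        have hdC : (d : ℂ) = (d' : ℂ) * c := by
          rw [hc, hd']
          push_cast
          ring
        have hkc : F = (k : ℂ) * c := by
          rw [hFval, hk]
          push_cast
          rw [hdC, ← e2]
          ring
        have harg : Complex.I * (t : ℂ) * (F + F + 1)
            = Complex.I * (π : ℂ) / c + (k : ℂ) * (2 * (π : ℂ) * Complex.I) := by
          rw [htC, hkc]
          field_simp
          ring
        rw [harg, Complex.exp_add, Complex.exp_int_mul_two_pi_mul_I, mul_one, ← hE,
          hα, hβ]
        ring
      · -- s = -1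
        rw [h1]
        have harg : Complex.I * (t : ℂ) * (-1 * F + F + -1)
            = -(Complex.I * (π : ℂ)) / c := by
          rw [htC]; ring
        rw [harg, ← hE', hα, hβ]
        ring
    -- T acts on χ by s
    have hTχ : T *ᵥ ⇑χ = s • ⇑χ := by
      funext g
      have e1 : (T *ᵥ ⇑χ) g = ∑ h : ZMod 2 × H,
          (if h = g - ((1 : ZMod 2), (0 : H)) then χ h else 0) := by
        simp only [Matrix.mulVec, dotProduct, hT, ite_mul, one_mul, zero_mul]
        exact Finset.sum_congr rfl fun h _ => if_congr (hcond g h _) rfl rfl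
      rw [e1, Finset.sum_ite_eq' Finset.univ, if_pos (Finset.mem_univ _)]
      rw [hsub g 1 0]
      simp only [neg_zero, hzz, mul_one, Pi.smul_apply, smul_eq_mul, ← hs]
      ring
    -- put it together
    rw [hHt]
    rw [exp_mulVec_eigen ((Complex.I * (t : ℂ)) • A) ⇑χ (Complex.I * (t : ℂ) * (s * F + F + s))
      (by rw [Matrix.smul_mulVec, hAχ, smul_smul])]
    rw [Matrix.add_mulVec, Matrix.smul_mulVec, Matrix.smul_mulVec,
      Matrix.one_mulVec, hTχ, hexp, add_smul, smul_smul]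
  -- matrix identity
  have hmat : Ht = α • (1 : Matrix (ZMod 2 × H) (ZMod 2 × H) ℂ) + β • T := by
    have h2 : Matrix.toLin' Ht = Matrix.toLin' (α • 1 + β • T) := by
      refine Module.Basis.ext (AddChar.complexBasis (ZMod 2 × H)) fun χ => ?_
      simp only [AddChar.complexBasis_apply, Matrix.toLin'_apply]
      exact key χ
    exact Matrix.toLin'.injective h2
  -- conclusion
  intro v
  rw [hmat, Matrix.add_mulVec, Matrix.smul_mulVec, Matrix.smul_mulVec,
    Matrix.one_mulVec]
  congr 2
  rw [Matrix.mulVec_single]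
  funext g
  simp only [mul_one, hT, Pi.single_apply, MulOpposite.op_one, one_smul, Matrix.col,
    Matrix.transpose_apply]
  refine if_congr ?_ rfl rfl
  rw [sub_eq_iff_eq_add, add_comm]
end

section
/- Let n ≥ 2, S₀, S₁ ⊆ 𝔽₂^{n-1} with 0 ∉ S₁, d₀ = |S₀|, d₁ = |S₁|, and S = ({0}×S₀) ∪ ({1}×S₁) ∪ {(1,0)} ⊆ 𝔽₂^n. With a = (1,0,…,0), G₀ = {0}×𝔽₂^{n-1}, G₁ = {1}×𝔽₂^{n-1}: if min(v₂(d₀+d₁), v₂(d₀-d₁)) ≥ 3 and the gcd M of eigenvalue differences is at least 8, then with κ = min(v₂(M), v₂(d₀+d₁), v₂(d₀-d₁)) ≥ 3 and t = 2π/2^κ, one has e^{itλ_g} = e^{i2π/2^κ} for all g ∈ G₀ and e^{itλ_g} = e^{-i2π/2^κ} for all g ∈ G₁; hence Cay(𝔽₂^n, S) exhibits fractional revival between x and x+a for all x at time t. -/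
open Matrix Real

namespace CubelikeFR

/-- character pairing on the full group -/
def eps {m : ℕ} (x w : ZMod 2 × (Fin m → ZMod 2)) : ℤ :=
  (-1) ^ ((x.1 * w.1).val + (∑ i, x.2 i * w.2 i).val)

/-- character pairing on the pi part -/
def chi {m : ℕ} (y s : Fin m → ZMod 2) : ℤ :=
  (-1) ^ ((∑ i, y i * s i).val)

lemma neg_one_pow_val_add (a b : ZMod 2) :
    (-1 : ℤ) ^ ((a + b).val) = (-1 : ℤ) ^ a.val * (-1 : ℤ) ^ b.val := by revert a b; decide

lemma chi_mul {m : ℕ} (y s s' : Fin m → ZMod 2) :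
    chi y s * chi y s' = chi y (s + s') := by
  unfold chi
  have h : (∑ i, y i * (s + s') i) = (∑ i, y i * s i) + (∑ i, y i * s' i) := by
    rw [← Finset.sum_add_distrib]
    exact Finset.sum_congr rfl fun i _ => by simp [mul_add]
  rw [h, neg_one_pow_val_add]

lemma chi_zero_right {m : ℕ} (y : Fin m → ZMod 2) : chi y 0 = 1 := by
  unfold chi; simp

lemma chi_zero_left {m : ℕ} (s : Fin m → ZMod 2) : chi 0 s = 1 := by
  unfold chi; simp

lemma zmod2_self_add {m : ℕ} (v : Fin m → ZMod 2) : v + v = 0 := by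
  funext i
  have : ∀ c : ZMod 2, c + c = 0 := by decide
  exact this (v i)

lemma chi_orth {m : ℕ} (a : Fin m → ZMod 2) :
    ∑ y : Fin m → ZMod 2, chi y a = if a = 0 then (2 : ℤ) ^ m else 0 := by
  by_cases h : a = 0
  · subst h
    simp [chi_zero_right, Finset.card_univ, Fintype.card_fun]
  · rw [if_neg h]
    obtain ⟨j, hj⟩ : ∃ j, a j ≠ 0 := by
      by_contra hc; push_neg at hc; exact h (funext fun i => hc i)
    have hj1 : a j = 1 := by
      have : ∀ c : ZMod 2, c ≠ 0 → c = 1 := by decide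
      exact this _ hj
    refine Finset.sum_ninvolution (fun y : Fin m → ZMod 2 => y + (Pi.single j 1 : Fin m → ZMod 2)) ?_ ?_ (fun _ => Finset.mem_univ _) ?_
    · intro y
      have hsum : (∑ i, (y + (Pi.single j 1 : Fin m → ZMod 2)) i * a i) = (∑ i, y i * a i) + 1 := by
        have : ∀ i, (y + (Pi.single j 1 : Fin m → ZMod 2)) i * a i = y i * a i + (Pi.single j 1 : Fin m → ZMod 2) i * a i := by
          intro i; simp [add_mul]
        rw [Finset.sum_congr rfl fun i _ => this i, Finset.sum_add_distrib]
        congr 1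
        have : ∀ i, (Pi.single j 1 : Fin m → ZMod 2) i * a i
            = if i = j then a j else 0 := by
          intro i; by_cases hij : i = j <;> simp [hij, Pi.single_apply]
        rw [Finset.sum_congr rfl fun i _ => this i, Finset.sum_ite_eq' _ j]
        simp [hj1]
      unfold chi
      rw [hsum]
      have : ∀ c : ZMod 2, (-1 : ℤ) ^ ((c + 1).val) = -(-1) ^ c.val := by decide
      rw [this]; ring
    · intro y _
      intro hcon
      have := congrFun hcon j
      simp at this
    · intro y
      funext i
      show y i + (Pi.single j 1 : Fin m → ZMod 2) i + (Pi.single j 1 : Fin m → ZMod 2) i = y i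
      have : ∀ c d : ZMod 2, c + d + d = c := by decide
      exact this _ _


lemma eps_comm {m : ℕ} (x w : ZMod 2 × (Fin m → ZMod 2)) : eps x w = eps w x := by
  unfold eps
  rw [mul_comm x.1 w.1]
  congr 1
  rw [Finset.sum_congr rfl fun i _ => mul_comm (x.2 i) (w.2 i)]

lemma eps_add_left {m : ℕ} (x y w : ZMod 2 × (Fin m → ZMod 2)) :
    eps (x + y) w = eps x w * eps y w := by
  unfold eps
  have h1 : ((x + y).1 * w.1) = x.1 * w.1 + y.1 * w.1 := by
    show (x.1 + y.1) * w.1 = _; ring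
  have h2 : (∑ i, (x + y).2 i * w.2 i) = (∑ i, x.2 i * w.2 i) + (∑ i, y.2 i * w.2 i) := by
    rw [← Finset.sum_add_distrib]
    exact Finset.sum_congr rfl fun i _ => by show (x.2 i + y.2 i) * w.2 i = _; ring
  rw [h1, h2, pow_add, neg_one_pow_val_add, neg_one_pow_val_add, pow_add, pow_add]
  ring

lemma eps_add_right {m : ℕ} (x w w' : ZMod 2 × (Fin m → ZMod 2)) :
    eps x (w + w') = eps x w * eps x w' := by
  rw [eps_comm, eps_add_left, eps_comm w x, eps_comm w' x]

lemma zmod2_neg (c : ZMod 2) : -c = c := by revert c; decide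

lemma prod_neg_self {m : ℕ} (v : ZMod 2 × (Fin m → ZMod 2)) : -v = v := by
  refine Prod.ext (zmod2_neg v.1) (funext fun i => ?_)
  show -(v.2 i) = v.2 i
  exact zmod2_neg _

lemma prod_sub_eq_add {m : ℕ} (g s : ZMod 2 × (Fin m → ZMod 2)) : g - s = g + s := by
  rw [sub_eq_add_neg, prod_neg_self]

lemma prod_add_self {m : ℕ} (v : ZMod 2 × (Fin m → ZMod 2)) : v + v = 0 := by
  nth_rewrite 2 [← prod_neg_self v]
  rw [add_neg_cancel]

lemma prod_add_cancel_left {m : ℕ} (g h : ZMod 2 × (Fin m → ZMod 2)) : g + (g + h) = h := by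
  rw [← add_assoc, prod_add_self, zero_add]

lemma eps_orth {m : ℕ} (v : ZMod 2 × (Fin m → ZMod 2)) :
    ∑ w : ZMod 2 × (Fin m → ZMod 2), eps v w = if v = 0 then (2 : ℤ) ^ (m + 1) else 0 := by
  have hexp : ∀ c : ZMod 2, ∀ y : Fin m → ZMod 2,
      eps v (c, y) = (-1 : ℤ) ^ ((v.1 * c).val) * chi y v.2 := by
    intro c y
    unfold eps chi
    rw [pow_add]
    congr 2
    exact congrArg ZMod.val (Finset.sum_congr rfl fun i _ => mul_comm (v.2 i) (y i))
  rw [Fintype.sum_prod_type]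
  have : ∀ c : ZMod 2, (∑ y : Fin m → ZMod 2, eps v (c, y))
      = (-1 : ℤ) ^ ((v.1 * c).val) * (if v.2 = 0 then (2:ℤ)^m else 0) := by
    intro c
    rw [Finset.sum_congr rfl fun y _ => hexp c y, ← Finset.mul_sum, chi_orth]
  rw [Finset.sum_congr rfl fun c _ => this c, ← Finset.sum_mul]
  have hz : (∑ c : ZMod 2, (-1 : ℤ) ^ ((v.1 * c).val)) = if v.1 = 0 then 2 else 0 := by
    have : ∀ a : ZMod 2, (∑ c : ZMod 2, (-1 : ℤ) ^ ((a * c).val)) = if a = 0 then 2 else 0 := by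
      decide
    exact this v.1
  rw [hz]
  by_cases h1 : v.1 = 0 <;> by_cases h2 : v.2 = 0 <;>
    simp [h1, h2, Prod.ext_iff, pow_succ] <;> ring


lemma eps_eval_00 {m : ℕ} (c : ZMod 2) (y s : Fin m → ZMod 2) :
    eps (c, y) ((0 : ZMod 2), s) = chi y s := by
  unfold eps chi; simp

lemma eps_eval_01 {m : ℕ} (y s : Fin m → ZMod 2) :
    eps ((0 : ZMod 2), y) ((1 : ZMod 2), s) = chi y s := by
  unfold eps chi; simp

lemma eps_eval_11 {m : ℕ} (y s : Fin m → ZMod 2) :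
    eps ((1 : ZMod 2), y) ((1 : ZMod 2), s) = -chi y s := by
  unfold eps chi
  have : ((1 : ZMod 2) * 1).val = 1 := by decide
  rw [this, pow_add, pow_one]
  ring

lemma eps_a_eval {m : ℕ} (c : ZMod 2) (y : Fin m → ZMod 2) :
    eps ((1 : ZMod 2), (0 : Fin m → ZMod 2)) (c, y) = (-1 : ℤ) ^ c.val := by
  unfold eps
  have h : (∑ i, (0 : Fin m → ZMod 2) i * y i) = 0 := by simp
  simp [h]


lemma prod_add_eq_zero_iff {m : ℕ} (g h : ZMod 2 × (Fin m → ZMod 2)) :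
    g + h = 0 ↔ g = h := by
  constructor
  · intro hz
    have hc := prod_add_cancel_left g h
    rw [hz, add_zero] at hc
    exact hc
  · rintro rfl
    exact prod_add_self g

lemma unit_conj_of_mul_eq {Mo : Type*} [Monoid Mo] (U : Moˣ) (X D : Mo)
    (h : X * ↑U = ↑U * D) : X = ↑U * D * ↑U⁻¹ := by
  rw [← h, mul_assoc, Units.mul_inv, mul_one]

lemma zmod2_cases (c : ZMod 2) : c = 0 ∨ c = 1 := by revert c; decide

end CubelikeFR

/-- Theorem 4.1: a cubelike graph on `𝔽₂ × 𝔽₂^{m}` (with `n = m+1`)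
with connection set `S = ({0}×S₀) ∪ ({1}×S₁) ∪ {(1,0)}`, where
`min(v₂(d₀+d₁), v₂(d₀-d₁)) ≥ 3` and the gcd `M` of eigenvalue differences is at
least `8`, exhibits fractional revival between `x` and `x + (1,0)` for every vertex
`x` at time `t = 2π/2^κ`, where `κ = min(v₂(M), v₂(d₀+d₁), v₂(d₀-d₁)) ≥ 3`. -/
theorem cubelike_fractional_revival
    (m : ℕ) (hm : 1 ≤ m)
    (S₀ S₁ : Finset (Fin m → ZMod 2)) (h01 : (0 : Fin m → ZMod 2) ∉ S₁)
    (d₀ d₁ : ℤ) (hd₀ : d₀ = S₀.card) (hd₁ : d₁ = S₁.card)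
    (S : Finset (ZMod 2 × (Fin m → ZMod 2)))
    (hS : S = (({(0 : ZMod 2)} : Finset (ZMod 2)) ×ˢ S₀) ∪
        (({(1 : ZMod 2)} : Finset (ZMod 2)) ×ˢ S₁) ∪
        {((1 : ZMod 2), (0 : Fin m → ZMod 2))})
    (lam : ZMod 2 × (Fin m → ZMod 2) → ℤ)
    (hlam : ∀ g : ZMod 2 × (Fin m → ZMod 2), lam g =
      ∑ s ∈ S, (-1 : ℤ) ^ ((g.1 * s.1).val + (∑ i, g.2 i * s.2 i).val))
    (M₀ M₁ M : ℤ)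
    (hM₀ : M₀ = (Finset.univ.filter
        (fun g : ZMod 2 × (Fin m → ZMod 2) => g.1 = 0)).gcd
      (fun g => (S.card : ℤ) - lam g))
    (hM₁ : M₁ = (Finset.univ.filter
        (fun g : ZMod 2 × (Fin m → ZMod 2) => g.1 = 1)).gcd
      (fun g => lam ((1 : ZMod 2), (0 : Fin m → ZMod 2)) - lam g))
    (hM : M = gcd M₀ M₁)
    (hval : (8 : ℤ) ∣ (d₀ + d₁) ∧ (8 : ℤ) ∣ (d₀ - d₁))
    (hM8 : (8 : ℤ) ≤ M)
    (κ : ℕ)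
    (hκ : ((2 : ℤ) ^ κ ∣ M ∧ (2 : ℤ) ^ κ ∣ (d₀ + d₁) ∧ (2 : ℤ) ^ κ ∣ (d₀ - d₁)) ∧
      ¬ ((2 : ℤ) ^ (κ + 1) ∣ M ∧ (2 : ℤ) ^ (κ + 1) ∣ (d₀ + d₁) ∧
          (2 : ℤ) ^ (κ + 1) ∣ (d₀ - d₁)))
    (t : ℝ) (ht : t = 2 * π / 2 ^ κ)
    (A : Matrix (ZMod 2 × (Fin m → ZMod 2)) (ZMod 2 × (Fin m → ZMod 2)) ℂ)
    (hA : ∀ g h, A g h = if g - h ∈ S then 1 else 0)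
    (Ht : Matrix (ZMod 2 × (Fin m → ZMod 2)) (ZMod 2 × (Fin m → ZMod 2)) ℂ)
    (hHt : Ht = NormedSpace.exp ((Complex.I * (t : ℂ)) • A)) :
    3 ≤ κ ∧
    (∀ y : Fin m → ZMod 2,
      Complex.exp (Complex.I * (t : ℂ) * (lam ((0 : ZMod 2), y) : ℂ)) =
        Complex.exp (Complex.I * 2 * (π : ℂ) / 2 ^ κ)) ∧
    (∀ y : Fin m → ZMod 2,
      Complex.exp (Complex.I * (t : ℂ) * (lam ((1 : ZMod 2), y) : ℂ)) =
        Complex.exp (-(Complex.I * 2 * (π : ℂ)) / 2 ^ κ)) ∧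
    ∃ α β : ℂ, α ≠ 0 ∧ β ≠ 0 ∧
      ‖α‖ ^ 2 + ‖β‖ ^ 2 = 1 ∧
      ∀ x : ZMod 2 × (Fin m → ZMod 2),
        Ht *ᵥ (Pi.single x 1 : ZMod 2 × (Fin m → ZMod 2) → ℂ) =
          α • (Pi.single x 1 : ZMod 2 × (Fin m → ZMod 2) → ℂ) +
          β • (Pi.single (x + ((1 : ZMod 2), (0 : Fin m → ZMod 2))) 1 :
            ZMod 2 × (Fin m → ZMod 2) → ℂ) := by
  
  classical
  obtain ⟨hval1, hval2⟩ := hval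
  -- abbreviations
  set a : ZMod 2 × (Fin m → ZMod 2) := ((1 : ZMod 2), (0 : Fin m → ZMod 2)) with ha
  -- disjointness of the three pieces of S
  have hdAB : Disjoint ((({(0 : ZMod 2)} : Finset (ZMod 2)) ×ˢ S₀))
      ((({(1 : ZMod 2)} : Finset (ZMod 2)) ×ˢ S₁)) := by
    rw [Finset.disjoint_left]
    rintro ⟨c, s⟩ hA hB
    simp only [Finset.mem_product, Finset.mem_singleton] at hA hB
    rw [hA.1] at hB
    exact (by decide : ¬ ((0 : ZMod 2) = 1)) hB.1
  have hdABC : Disjoint ((({(0 : ZMod 2)} : Finset (ZMod 2)) ×ˢ S₀) ∪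
      (({(1 : ZMod 2)} : Finset (ZMod 2)) ×ˢ S₁))
      ({((1 : ZMod 2), (0 : Fin m → ZMod 2))} : Finset (ZMod 2 × (Fin m → ZMod 2))) := by
    rw [Finset.disjoint_right]
    intro v hv hvu
    rw [Finset.mem_singleton] at hv
    subst hv
    rw [Finset.mem_union] at hvu
    rcases hvu with h | h
    · simp only [Finset.mem_product, Finset.mem_singleton] at h
      exact (by decide : ¬ ((1 : ZMod 2) = 0)) h.1
    · simp only [Finset.mem_product, Finset.mem_singleton] at h
      exact h01 h.2
  -- cardinality of S
  have hScard : (S.card : ℤ) = d₀ + d₁ + 1 := by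
    rw [hS, Finset.card_union_of_disjoint hdABC, Finset.card_union_of_disjoint hdAB]
    simp [hd₀, hd₁]
  -- eigenvalue splitting
  have hsplit : ∀ g : ZMod 2 × (Fin m → ZMod 2), lam g =
      (∑ s ∈ S₀, CubelikeFR.eps g ((0 : ZMod 2), s)) +
      (∑ s ∈ S₁, CubelikeFR.eps g ((1 : ZMod 2), s)) +
      CubelikeFR.eps g ((1 : ZMod 2), (0 : Fin m → ZMod 2)) := by
    intro g
    rw [hlam g, hS, Finset.sum_union hdABC, Finset.sum_union hdAB,
      Finset.sum_product, Finset.sum_product, Finset.sum_singleton,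
      Finset.sum_singleton, Finset.sum_singleton]
    rfl
  have hl0 : ∀ y, lam ((0 : ZMod 2), y) =
      (∑ s ∈ S₀, CubelikeFR.chi y s) + (∑ s ∈ S₁, CubelikeFR.chi y s) + 1 := by
    intro y
    rw [hsplit]
    rw [Finset.sum_congr rfl fun s _ => CubelikeFR.eps_eval_00 0 y s,
      Finset.sum_congr rfl fun s _ => CubelikeFR.eps_eval_01 y s]
    congr 1
    rw [CubelikeFR.eps_eval_01, CubelikeFR.chi_zero_right]
  have hl1 : ∀ y, lam ((1 : ZMod 2), y) =
      (∑ s ∈ S₀, CubelikeFR.chi y s) - (∑ s ∈ S₁, CubelikeFR.chi y s) - 1 := by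
    intro y
    rw [hsplit]
    rw [Finset.sum_congr rfl fun s _ => CubelikeFR.eps_eval_00 1 y s,
      Finset.sum_congr rfl fun s _ => CubelikeFR.eps_eval_11 y s,
      CubelikeFR.eps_eval_11, CubelikeFR.chi_zero_right]
    simp [Finset.sum_neg_distrib]
    ring
  have hl10 : lam ((1 : ZMod 2), (0 : Fin m → ZMod 2)) = d₀ - d₁ - 1 := by
    rw [hl1 0]
    rw [Finset.sum_congr rfl fun s _ => CubelikeFR.chi_zero_left s,
      Finset.sum_congr rfl fun s _ => CubelikeFR.chi_zero_left s]
    simp [hd₀, hd₁]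
  -- divisibility of eigenvalue differences by M
  have hMdvd0 : ∀ y, M ∣ ((S.card : ℤ) - lam ((0 : ZMod 2), y)) := by
    intro y
    have h1 : M ∣ M₀ := hM ▸ gcd_dvd_left M₀ M₁
    refine h1.trans ?_
    rw [hM₀]
    exact Finset.gcd_dvd (Finset.mem_filter.2 ⟨Finset.mem_univ _, rfl⟩)
  have hMdvd1 : ∀ y, M ∣ (lam ((1 : ZMod 2), (0 : Fin m → ZMod 2)) - lam ((1 : ZMod 2), y)) := by
    intro y
    have h1 : M ∣ M₁ := hM ▸ gcd_dvd_right M₀ M₁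
    refine h1.trans ?_
    rw [hM₁]
    exact Finset.gcd_dvd (Finset.mem_filter.2 ⟨Finset.mem_univ _, rfl⟩)
    -- the gcd M divides a power of two (via character sums), hence 8 ∣ M
  have h8M : (8 : ℤ) ∣ M := by
    have hMpow : M ∣ (2 : ℤ) ^ (m + 1) := by
      by_cases hS0 : ∃ s₀ ∈ S₀, s₀ ≠ 0
      · obtain ⟨s₀, hs₀mem, hs₀ne⟩ := hS0
        have hF : ∀ y, M ∣ (2 * d₀ - 2 * ∑ s ∈ S₀, CubelikeFR.chi y s) := by
          intro y
          have h := (hMdvd0 y).add (hMdvd1 y)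
          have heq : ((S.card : ℤ) - lam ((0 : ZMod 2), y)) +
              (lam ((1 : ZMod 2), (0 : Fin m → ZMod 2)) - lam ((1 : ZMod 2), y)) =
              2 * d₀ - 2 * ∑ s ∈ S₀, CubelikeFR.chi y s := by
            rw [hScard, hl0 y, hl1 y, hl10]; ring
          rwa [heq] at h
        have hsum : M ∣ ∑ y : Fin m → ZMod 2,
            (2 * d₀ - 2 * ∑ s ∈ S₀, CubelikeFR.chi y s) * CubelikeFR.chi y s₀ :=
          Finset.dvd_sum fun y _ => (hF y).mul_right _
        have hvalsum : (∑ y : Fin m → ZMod 2,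
            (2 * d₀ - 2 * ∑ s ∈ S₀, CubelikeFR.chi y s) * CubelikeFR.chi y s₀)
            = -(2 ^ (m + 1)) := by
          have hexp : ∀ y : Fin m → ZMod 2,
              (2 * d₀ - 2 * ∑ s ∈ S₀, CubelikeFR.chi y s) * CubelikeFR.chi y s₀
              = 2 * d₀ * CubelikeFR.chi y s₀ - 2 * ∑ s ∈ S₀, CubelikeFR.chi y (s + s₀) := by
            intro y
            have hmm : (∑ s ∈ S₀, CubelikeFR.chi y s) * CubelikeFR.chi y s₀
                = ∑ s ∈ S₀, CubelikeFR.chi y (s + s₀) := by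
              rw [Finset.sum_mul]
              exact Finset.sum_congr rfl fun s _ => CubelikeFR.chi_mul y s s₀
            rw [sub_mul, mul_assoc 2 (∑ s ∈ S₀, CubelikeFR.chi y s) (CubelikeFR.chi y s₀), hmm]
          rw [Finset.sum_congr rfl fun y _ => hexp y, Finset.sum_sub_distrib,
            ← Finset.mul_sum, CubelikeFR.chi_orth, if_neg hs₀ne,
            ← Finset.mul_sum, Finset.sum_comm]
          have hin : ∀ s ∈ S₀, (∑ y : Fin m → ZMod 2, CubelikeFR.chi y (s + s₀))
              = if s = s₀ then (2 : ℤ) ^ m else 0 := by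
            intro s _
            rw [CubelikeFR.chi_orth]
            congr 1
            simp only [eq_iff_iff]
            constructor
            · intro hz
              have := congrArg (· + s₀) hz
              simpa [add_assoc, CubelikeFR.zmod2_self_add] using this
            · intro hz; rw [hz]; exact CubelikeFR.zmod2_self_add s₀
          rw [Finset.sum_congr rfl hin, Finset.sum_ite_eq' S₀ s₀, if_pos hs₀mem]
          ring
        rw [hvalsum] at hsum
        exact (dvd_neg.1 hsum)
      · by_cases hS1 : S₁.Nonempty
        · obtain ⟨s₀, hs₀mem⟩ := hS1
          have hs₀ne : s₀ ≠ 0 := fun h => h01 (h ▸ hs₀mem)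
          have hF : ∀ y, M ∣ (2 * d₁ - 2 * ∑ s ∈ S₁, CubelikeFR.chi y s) := by
            intro y
            have h := (hMdvd0 y).sub (hMdvd1 y)
            have heq : ((S.card : ℤ) - lam ((0 : ZMod 2), y)) -
                (lam ((1 : ZMod 2), (0 : Fin m → ZMod 2)) - lam ((1 : ZMod 2), y)) =
                2 * d₁ - 2 * ∑ s ∈ S₁, CubelikeFR.chi y s := by
              rw [hScard, hl0 y, hl1 y, hl10]; ring
            rwa [heq] at h
          have hsum : M ∣ ∑ y : Fin m → ZMod 2,
              (2 * d₁ - 2 * ∑ s ∈ S₁, CubelikeFR.chi y s) * CubelikeFR.chi y s₀ :=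
            Finset.dvd_sum fun y _ => (hF y).mul_right _
          have hvalsum : (∑ y : Fin m → ZMod 2,
              (2 * d₁ - 2 * ∑ s ∈ S₁, CubelikeFR.chi y s) * CubelikeFR.chi y s₀)
              = -(2 ^ (m + 1)) := by
            have hexp : ∀ y : Fin m → ZMod 2,
                (2 * d₁ - 2 * ∑ s ∈ S₁, CubelikeFR.chi y s) * CubelikeFR.chi y s₀
                = 2 * d₁ * CubelikeFR.chi y s₀ - 2 * ∑ s ∈ S₁, CubelikeFR.chi y (s + s₀) := by
              intro y
              have hmm : (∑ s ∈ S₁, CubelikeFR.chi y s) * CubelikeFR.chi y s₀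
                  = ∑ s ∈ S₁, CubelikeFR.chi y (s + s₀) := by
                rw [Finset.sum_mul]
                exact Finset.sum_congr rfl fun s _ => CubelikeFR.chi_mul y s s₀
              rw [sub_mul, mul_assoc 2 (∑ s ∈ S₁, CubelikeFR.chi y s) (CubelikeFR.chi y s₀), hmm]
            rw [Finset.sum_congr rfl fun y _ => hexp y, Finset.sum_sub_distrib,
              ← Finset.mul_sum, CubelikeFR.chi_orth, if_neg hs₀ne,
              ← Finset.mul_sum, Finset.sum_comm]
            have hin : ∀ s ∈ S₁, (∑ y : Fin m → ZMod 2, CubelikeFR.chi y (s + s₀))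
                = if s = s₀ then (2 : ℤ) ^ m else 0 := by
              intro s _
              rw [CubelikeFR.chi_orth]
              congr 1
              simp only [eq_iff_iff]
              constructor
              · intro hz
                have := congrArg (· + s₀) hz
                simpa [add_assoc, CubelikeFR.zmod2_self_add] using this
              · intro hz; rw [hz]; exact CubelikeFR.zmod2_self_add s₀
            rw [Finset.sum_congr rfl hin, Finset.sum_ite_eq' S₁ s₀, if_pos hs₀mem]
            ring
          rw [hvalsum] at hsum
          exact (dvd_neg.1 hsum)
        · -- degenerate case : S₀ ⊆ {0}, S₁ = ∅, contradiction with 8 ≤ M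
          exfalso
          push_neg at hS0
          rw [Finset.not_nonempty_iff_eq_empty] at hS1
          have hchi : ∀ y, (∑ s ∈ S₀, CubelikeFR.chi y s) = d₀ := by
            intro y
            have h1 : ∀ s ∈ S₀, CubelikeFR.chi y s = 1 := fun s hs => by
              rw [hS0 s hs, CubelikeFR.chi_zero_right]
            rw [Finset.sum_congr rfl h1, Finset.sum_const, hd₀]
            simp
          have hM0z : M₀ = 0 := by
            rw [hM₀, Finset.gcd_eq_zero_iff]
            rintro ⟨c, y⟩ hg
            rw [Finset.mem_filter] at hg
            have hc : c = 0 := hg.2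
            subst hc
            rw [hl0 y, hchi y, hS1, hScard]
            simp [hd₁, hS1]
          have hM1z : M₁ = 0 := by
            rw [hM₁, Finset.gcd_eq_zero_iff]
            rintro ⟨c, y⟩ hg
            rw [Finset.mem_filter] at hg
            have hc : c = 1 := hg.2
            subst hc
            rw [hl10, hl1 y, hchi y, hS1, hd₁, hS1]
            simp
          rw [hM, hM0z, hM1z] at hM8
          norm_num at hM8
    -- M divides a power of 2 and is at least 8, so 8 divides M
    have hna : M.natAbs ∣ 2 ^ (m + 1) := by
      simpa [Int.natAbs_pow] using Int.natAbs_dvd_natAbs.2 hMpow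
    obtain ⟨j, hjle, hjeq⟩ := (Nat.dvd_prime_pow Nat.prime_two).1 hna
    have h8na : 8 ≤ M.natAbs := by omega
    have h3j : 3 ≤ j := by
      by_contra hc
      push_neg at hc
      interval_cases j <;> omega
    have : (8 : ℕ) ∣ M.natAbs := by
      rw [hjeq]
      exact (pow_dvd_pow 2 h3j).trans dvd_rfl
    have hMnonneg : (0 : ℤ) ≤ M := by linarith
    rw [← Int.natAbs_of_nonneg hMnonneg]
    exact_mod_cast this
  -- κ ≥ 3
  obtain ⟨⟨hκM, hκp, hκm⟩, hκnot⟩ := hκ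
  have hκ3 : 3 ≤ κ := by
    by_contra hc
    push_neg at hc
    apply hκnot
    have h2 : ((2 : ℤ) ^ (κ + 1)) ∣ 8 := by
      have : ((2 : ℤ) ^ (κ + 1)) ∣ 2 ^ 3 := pow_dvd_pow 2 (by omega)
      simpa using this
    exact ⟨h2.trans h8M, h2.trans hval1, h2.trans hval2⟩
    -- exponential identities
  have hexp0 : ∀ y : Fin m → ZMod 2,
      Complex.exp (Complex.I * (t : ℂ) * (lam ((0 : ZMod 2), y) : ℂ)) =
        Complex.exp (Complex.I * 2 * (π : ℂ) / 2 ^ κ) := by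
    intro y
    have hdvd : (2 : ℤ) ^ κ ∣ (lam ((0 : ZMod 2), y) - 1) := by
      have h1 : (2 : ℤ) ^ κ ∣ ((S.card : ℤ) - lam ((0 : ZMod 2), y)) := hκM.trans (hMdvd0 y)
      have h2 := dvd_sub hκp h1
      have h3 : (d₀ + d₁) - ((S.card : ℤ) - lam ((0 : ZMod 2), y)) = lam ((0 : ZMod 2), y) - 1 := by
        rw [hScard]; ring
      rwa [h3] at h2
    obtain ⟨k, hk⟩ := hdvd
    have hlamk : ((lam ((0 : ZMod 2), y) : ℤ) : ℂ) = 1 + 2 ^ κ * (k : ℂ) := by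
      have h4 : lam ((0 : ZMod 2), y) = 1 + 2 ^ κ * k := by linarith [hk]
      rw [h4]; push_cast; ring
    have harg : Complex.I * (t : ℂ) * ((lam ((0 : ZMod 2), y) : ℤ) : ℂ)
        = Complex.I * 2 * (π : ℂ) / 2 ^ κ + (k : ℂ) * (2 * (π : ℂ) * Complex.I) := by
      rw [ht, hlamk]
      have h2κ : ((2 : ℂ) ^ κ) ≠ 0 := pow_ne_zero _ two_ne_zero
      push_cast
      field_simp
    rw [harg, Complex.exp_add, Complex.exp_int_mul_two_pi_mul_I, mul_one]
  have hexp1 : ∀ y : Fin m → ZMod 2,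
      Complex.exp (Complex.I * (t : ℂ) * (lam ((1 : ZMod 2), y) : ℂ)) =
        Complex.exp (-(Complex.I * 2 * (π : ℂ)) / 2 ^ κ) := by
    intro y
    have hdvd : (2 : ℤ) ^ κ ∣ (lam ((1 : ZMod 2), y) + 1) := by
      have h1 : (2 : ℤ) ^ κ ∣ (lam ((1 : ZMod 2), (0 : Fin m → ZMod 2)) - lam ((1 : ZMod 2), y)) :=
        hκM.trans (hMdvd1 y)
      have h2 := dvd_sub hκm h1
      have h3 : (d₀ - d₁) -
          (lam ((1 : ZMod 2), (0 : Fin m → ZMod 2)) - lam ((1 : ZMod 2), y)) =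
          lam ((1 : ZMod 2), y) + 1 := by
        rw [hl10]; ring
      rwa [h3] at h2
    obtain ⟨k, hk⟩ := hdvd
    have hlamk : ((lam ((1 : ZMod 2), y) : ℤ) : ℂ) = -1 + 2 ^ κ * (k : ℂ) := by
      have h4 : lam ((1 : ZMod 2), y) = -1 + 2 ^ κ * k := by linarith [hk]
      rw [h4]; push_cast; ring
    have harg : Complex.I * (t : ℂ) * ((lam ((1 : ZMod 2), y) : ℤ) : ℂ)
        = -(Complex.I * 2 * (π : ℂ)) / 2 ^ κ + (k : ℂ) * (2 * (π : ℂ) * Complex.I) := by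
      rw [ht, hlamk]
      have h2κ : ((2 : ℂ) ^ κ) ≠ 0 := pow_ne_zero _ two_ne_zero
      push_cast
      field_simp
    rw [harg, Complex.exp_add, Complex.exp_int_mul_two_pi_mul_I, mul_one]
  refine ⟨hκ3, hexp0, hexp1, ?_⟩
    -- the fractional-revival part
  set θ : ℝ := 2 * π / 2 ^ κ with hθ
  set α : ℂ := ((Real.cos θ : ℝ) : ℂ) with hα
  set β : ℂ := Complex.I * ((Real.sin θ : ℝ) : ℂ) with hβ
  -- basic positivity facts
  have hθpos : 0 < θ := by rw [hθ]; positivity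
  have hθlt : θ < π / 2 := by
    have h8 : (8 : ℝ) ≤ 2 ^ κ := by
      calc (8 : ℝ) = 2 ^ 3 := by norm_num
      _ ≤ 2 ^ κ := by exact pow_le_pow_right₀ (by norm_num) hκ3
    have hle : θ ≤ 2 * π / 8 := by
      rw [hθ]
      gcongr
      all_goals positivity
    have := Real.pi_pos
    linarith
  have hcos : 0 < Real.cos θ := Real.cos_pos_of_mem_Ioo ⟨by linarith [Real.pi_pos], hθlt⟩
  have hsin : 0 < Real.sin θ := Real.sin_pos_of_pos_of_lt_pi hθpos (by linarith [Real.pi_pos])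
  have hαne : α ≠ 0 := Complex.ofReal_ne_zero.2 (ne_of_gt hcos)
  have hβne : β ≠ 0 := mul_ne_zero Complex.I_ne_zero (Complex.ofReal_ne_zero.2 (ne_of_gt hsin))
  have habs : ‖α‖ ^ 2 + ‖β‖ ^ 2 = 1 := by
    rw [hα, hβ, norm_mul, Complex.norm_I, Complex.norm_real, Complex.norm_real, one_mul,
      Real.norm_eq_abs, Real.norm_eq_abs, sq_abs, sq_abs, Real.cos_sq_add_sin_sq]
  -- the character matrix
  set Q : Matrix (ZMod 2 × (Fin m → ZMod 2)) (ZMod 2 × (Fin m → ZMod 2)) ℂ :=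
    Matrix.of (fun g w => ((CubelikeFR.eps g w : ℤ) : ℂ)) with hQ
  set T : Matrix (ZMod 2 × (Fin m → ZMod 2)) (ZMod 2 × (Fin m → ZMod 2)) ℂ :=
    Matrix.of (fun g h => if g - h = a then 1 else 0) with hT
  have hpow : ((2 : ℂ) ^ (m + 1)) ≠ 0 := pow_ne_zero _ two_ne_zero
  have hQQ : Q * Q = ((2 : ℂ) ^ (m + 1)) • (1 : Matrix (ZMod 2 × (Fin m → ZMod 2)) (ZMod 2 × (Fin m → ZMod 2)) ℂ) := by
    ext g h
    simp only [Matrix.mul_apply, hQ, Matrix.of_apply, Matrix.smul_apply, Matrix.one_apply,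
      smul_eq_mul]
    have h1 : ∀ w : ZMod 2 × (Fin m → ZMod 2),
        ((CubelikeFR.eps g w : ℤ) : ℂ) * ((CubelikeFR.eps w h : ℤ) : ℂ)
        = ((CubelikeFR.eps (g + h) w : ℤ) : ℂ) := by
      intro w
      rw [CubelikeFR.eps_comm w h, CubelikeFR.eps_add_left]
      push_cast
      ring
    rw [Finset.sum_congr rfl fun w _ => h1 w, ← Int.cast_sum, CubelikeFR.eps_orth]
    by_cases hgh : g = h
    · rw [if_pos ((CubelikeFR.prod_add_eq_zero_iff g h).2 hgh), if_pos hgh]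
      push_cast
      simp
    · rw [if_neg (fun hz => hgh ((CubelikeFR.prod_add_eq_zero_iff g h).1 hz)), if_neg hgh]
      push_cast
      simp
  set Qinv : Matrix (ZMod 2 × (Fin m → ZMod 2)) (ZMod 2 × (Fin m → ZMod 2)) ℂ :=
    ((2 : ℂ) ^ (m + 1))⁻¹ • Q with hQinv
  have hQQinv : Q * Qinv = 1 := by
    rw [hQinv, Matrix.mul_smul, hQQ, smul_smul, inv_mul_cancel₀ hpow, one_smul]
  have hQinvQ : Qinv * Q = 1 := by
    rw [hQinv, Matrix.smul_mul, hQQ, smul_smul, inv_mul_cancel₀ hpow, one_smul]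
  set U : (Matrix (ZMod 2 × (Fin m → ZMod 2)) (ZMod 2 × (Fin m → ZMod 2)) ℂ)ˣ :=
    ⟨Q, Qinv, hQQinv, hQinvQ⟩ with hUdef
  -- A Q = Q Λ
  have hAQ : A * Q = Q * Matrix.diagonal (fun w => ((lam w : ℤ) : ℂ)) := by
    ext g w
    rw [Matrix.mul_diagonal, Matrix.mul_apply]
    simp only [hQ, Matrix.of_apply]
    have h1 : ∀ h', A g h' * ((CubelikeFR.eps h' w : ℤ) : ℂ)
        = (((if g + h' ∈ S then CubelikeFR.eps h' w else 0 : ℤ)) : ℂ) := by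
      intro h'
      rw [hA, CubelikeFR.prod_sub_eq_add]
      by_cases hmem : g + h' ∈ S <;> simp [hmem]
    rw [Finset.sum_congr rfl fun h' _ => h1 h', ← Int.cast_sum]
    have key : (∑ h' : ZMod 2 × (Fin m → ZMod 2),
        (if g + h' ∈ S then CubelikeFR.eps h' w else 0 : ℤ))
        = CubelikeFR.eps g w * lam w := by
      have hbij : Function.Bijective (fun h' : ZMod 2 × (Fin m → ZMod 2) => g + h') :=
        Function.Involutive.bijective (fun h' => CubelikeFR.prod_add_cancel_left g h')
      rw [Fintype.sum_bijective (fun h' : ZMod 2 × (Fin m → ZMod 2) => g + h') hbij _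
        (fun v => if v ∈ S then CubelikeFR.eps (g + v) w else 0) (fun h' => by
          simp only [CubelikeFR.prod_add_cancel_left])]
      rw [Finset.sum_ite_mem, Finset.univ_inter,
        Finset.sum_congr rfl fun v _ => CubelikeFR.eps_add_left g v w, ← Finset.mul_sum]
      congr 1
      rw [hlam w]
      exact Finset.sum_congr rfl fun v _ => CubelikeFR.eps_comm v w
    rw [key]
    push_cast
    ring
  -- T Q = Q D_T
  have hTQ : T * Q = Q * Matrix.diagonal (fun w => ((CubelikeFR.eps a w : ℤ) : ℂ)) := by
    ext g w
    rw [Matrix.mul_diagonal, Matrix.mul_apply]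
    simp only [hQ, hT, Matrix.of_apply]
    have h1 : ∀ h', (if g - h' = a then (1:ℂ) else 0) * ((CubelikeFR.eps h' w : ℤ) : ℂ)
        = if h' = g + a then ((CubelikeFR.eps h' w : ℤ) : ℂ) else 0 := by
      intro h'
      rw [CubelikeFR.prod_sub_eq_add]
      have hiff : g + h' = a ↔ h' = g + a := by
        constructor
        · intro hz
          have := congrArg (fun v => g + v) hz
          simpa [CubelikeFR.prod_add_cancel_left] using this
        · intro hz
          rw [hz]
          exact CubelikeFR.prod_add_cancel_left g a
      by_cases hmem : h' = g + a
      · rw [if_pos (hiff.2 hmem), if_pos hmem, one_mul]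
      · rw [if_neg (fun hz => hmem (hiff.1 hz)), if_neg hmem, zero_mul]
    rw [Finset.sum_congr rfl fun h' _ => h1 h', Finset.sum_ite_eq' Finset.univ (g + a),
      if_pos (Finset.mem_univ _), CubelikeFR.eps_add_left g a w]
    push_cast
    ring
    -- conjugation forms
  have hUQ : (↑U : Matrix (ZMod 2 × (Fin m → ZMod 2)) (ZMod 2 × (Fin m → ZMod 2)) ℂ) = Q := rfl
  have hAconj : A = (↑U : Matrix _ _ ℂ) * Matrix.diagonal (fun w => ((lam w : ℤ) : ℂ)) * (↑(U⁻¹) : Matrix _ _ ℂ) :=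
    CubelikeFR.unit_conj_of_mul_eq U A _ (by rw [hUQ]; exact hAQ)
  have hsmulconj : (Complex.I * (t : ℂ)) • A
      = (↑U : Matrix _ _ ℂ) * Matrix.diagonal (fun w => (Complex.I * (t : ℂ)) * ((lam w : ℤ) : ℂ)) * (↑(U⁻¹) : Matrix _ _ ℂ) := by
    rw [hAconj, ← Matrix.smul_mul, ← Matrix.mul_smul]
    congr 2
    rw [← Matrix.diagonal_smul]
    congr 1
  have hHtconj : Ht = (↑U : Matrix _ _ ℂ) * Matrix.diagonal
      (fun w => Complex.exp (Complex.I * (t : ℂ) * ((lam w : ℤ) : ℂ))) * (↑(U⁻¹) : Matrix _ _ ℂ) := by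
    rw [hHt, hsmulconj, Matrix.exp_units_conj U, Matrix.exp_diagonal]
    have hdg : NormedSpace.exp
        (fun w : ZMod 2 × (Fin m → ZMod 2) => Complex.I * (t : ℂ) * ((lam w : ℤ) : ℂ))
        = fun w : ZMod 2 × (Fin m → ZMod 2) =>
          Complex.exp (Complex.I * (t : ℂ) * ((lam w : ℤ) : ℂ)) := by
      funext w
      rw [Pi.coe_exp, Complex.exp_eq_exp_ℂ]
    rw [hdg]
    -- the diagonal entries match α + β · ε_a
  have hdiageq : (fun w : ZMod 2 × (Fin m → ZMod 2) =>
      Complex.exp (Complex.I * (t : ℂ) * ((lam w : ℤ) : ℂ)))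
      = fun w => α + β * ((CubelikeFR.eps a w : ℤ) : ℂ) := by
    funext w
    obtain ⟨c, y⟩ := w
    have hepsa : CubelikeFR.eps a (c, y) = (-1 : ℤ) ^ c.val := CubelikeFR.eps_a_eval c y
    rcases CubelikeFR.zmod2_cases c with hc | hc
    · subst hc
      rw [hexp0 y, hepsa]
      have harg : Complex.I * 2 * (π : ℂ) / 2 ^ κ = ((θ : ℝ) : ℂ) * Complex.I := by
        rw [hθ]
        have h2κ : ((2 : ℂ) ^ κ) ≠ 0 := pow_ne_zero _ two_ne_zero
        push_cast
        field_simp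
      rw [harg, Complex.exp_mul_I, ← Complex.ofReal_cos, ← Complex.ofReal_sin]
      have : ((0 : ZMod 2)).val = 0 := rfl
      rw [this, pow_zero, hα, hβ]
      push_cast
      ring
    · subst hc
      rw [hexp1 y, hepsa]
      have harg : -(Complex.I * 2 * (π : ℂ)) / 2 ^ κ = (((-θ : ℝ)) : ℂ) * Complex.I := by
        rw [hθ]
        have h2κ : ((2 : ℂ) ^ κ) ≠ 0 := pow_ne_zero _ two_ne_zero
        push_cast
        field_simp
      rw [harg, Complex.exp_mul_I, ← Complex.ofReal_cos, ← Complex.ofReal_sin,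
        Real.cos_neg, Real.sin_neg]
      have : ((1 : ZMod 2)).val = 1 := rfl
      rw [this, pow_one, hα, hβ]
      push_cast
      ring
  -- N = α 1 + β T has the same conjugated form
  have hNQ : (α • (1 : Matrix (ZMod 2 × (Fin m → ZMod 2)) (ZMod 2 × (Fin m → ZMod 2)) ℂ)
      + β • T) * Q = Q * Matrix.diagonal (fun w => α + β * ((CubelikeFR.eps a w : ℤ) : ℂ)) := by
    have hdg : Matrix.diagonal (fun w : ZMod 2 × (Fin m → ZMod 2) =>
        α + β * ((CubelikeFR.eps a w : ℤ) : ℂ))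
        = α • (1 : Matrix (ZMod 2 × (Fin m → ZMod 2)) (ZMod 2 × (Fin m → ZMod 2)) ℂ)
          + β • Matrix.diagonal (fun w => ((CubelikeFR.eps a w : ℤ) : ℂ)) := by
      ext g h
      rcases eq_or_ne g h with hgh | hgh
      · subst hgh
        simp [Matrix.smul_apply, Matrix.one_apply_eq]
      · simp [Matrix.diagonal_apply_ne _ hgh, Matrix.one_apply_ne hgh, Matrix.smul_apply]
    rw [hdg, Matrix.add_mul, Matrix.smul_mul, Matrix.smul_mul, Matrix.one_mul, hTQ,
      Matrix.mul_add, Matrix.mul_smul, Matrix.mul_smul, Matrix.mul_one]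
  have hNconj : (α • (1 : Matrix (ZMod 2 × (Fin m → ZMod 2)) (ZMod 2 × (Fin m → ZMod 2)) ℂ)
      + β • T) = (↑U : Matrix _ _ ℂ) * Matrix.diagonal
        (fun w => α + β * ((CubelikeFR.eps a w : ℤ) : ℂ)) * (↑(U⁻¹) : Matrix _ _ ℂ) :=
    CubelikeFR.unit_conj_of_mul_eq U _ _ (by rw [hUQ]; exact hNQ)
  have hHtN : Ht = α • (1 : Matrix (ZMod 2 × (Fin m → ZMod 2)) (ZMod 2 × (Fin m → ZMod 2)) ℂ)
      + β • T := by
    rw [hHtconj, hdiageq, ← hNconj]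
  -- conclusion
  refine ⟨α, β, hαne, hβne, habs, fun x => ?_⟩
  have hTx : T *ᵥ (Pi.single x 1 : ZMod 2 × (Fin m → ZMod 2) → ℂ)
      = (Pi.single (x + a) 1 : ZMod 2 × (Fin m → ZMod 2) → ℂ) := by
    funext g
    have h1 : (T *ᵥ (Pi.single x 1 : ZMod 2 × (Fin m → ZMod 2) → ℂ)) g = T g x := by
      simp [Matrix.mulVec, dotProduct, Pi.single_apply, mul_ite]
    rw [h1, hT, Matrix.of_apply, Pi.single_apply]
    congr 1
    simp only [eq_iff_iff]
    exact sub_eq_iff_eq_add'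
  rw [hHtN, Matrix.add_mulVec, Matrix.smul_mulVec, Matrix.smul_mulVec,
    Matrix.one_mulVec, hTx]
end
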